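/- arXiv:2309.12549 — 2 statements merged into one kernel-verified Lean document; each statement's English description precedes it below -/
import Mathlib

section
/- Let s and t be integers with t even and 2 ≤ s < t. Let D = {±1, ±2, …, ±(s−1)/2} (as residues modulo t) if s is odd, and D = {±1, ±2, …, ±(s/2 − 1)} ∪ {t/2} if s is even. Then Circ(t; D) admits a C_2-factorization. -/
/-- The set of residues {±lo, ±(lo+1), …, ±hi} in Z_t. -/
def pmSet (t lo hi : ℕ) : Finset (ZMod t) :=
  ((Finset.Icc lo hi).image fun j : ℕ => (j : ZMod t)) ∪
  ((Finset.Icc lo hi).image fun j : ℕ => -(j : ZMod t))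

/-- A C₂-factorization of the directed circulant Circ(t; D): a family of |D|
fixed-point-free involutions σ of Z_t such that σ(i) − i ∈ D always, and for each
vertex i and each difference d ∈ D there is exactly one member σ with σ(i) = i + d. -/
def CirculantC2Factorization (t : ℕ) [NeZero t] (D : Finset (ZMod t)) : Prop :=
  ∃ σ : Fin D.card → Equiv.Perm (ZMod t),
    (∀ j, σ j * σ j = 1) ∧
    (∀ j i, σ j i ≠ i) ∧
    (∀ j i, σ j i - i ∈ D) ∧
    (∀ i : ZMod t, ∀ d ∈ D, ∃! j, σ j i = i + d)

set_option linter.unusedSectionVars false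
namespace St18

lemma modaux (L c b' q : ℕ) (h : b' * c ≡ 1 [MOD L]) :
    ((q + b') * c) % L = ((q * c) % L + 1) % L := by
  have h1 : (q + b') * c = q * c + b' * c := by ring
  have h2 : q * c + b' * c ≡ q * c + 1 [MOD L] := Nat.ModEq.add_left _ h
  rw [h1, Nat.mod_add_mod]
  exact h2

lemma succ_mod_cases (L y c : ℕ) (hy : y < L) (h : (y + 1) % L = c) :
    (y + 1 = L ∧ c = 0) ∨ (y + 1 < L ∧ c = y + 1) := by
  rcases Nat.lt_or_ge (y + 1) L with h1 | h1
  · right; exact ⟨h1, by rw [← h, Nat.mod_eq_of_lt h1]⟩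
  · left
    have he : y + 1 = L := by omega
    exact ⟨he, by rw [← h, he, Nat.mod_self]⟩

variable (t b : ℕ) [NeZero t]

def gg : ℕ := Nat.gcd b t
def LL : ℕ := t / gg t b
def bq : ℕ := b / gg t b
def cI : ℕ := bq t b ^ (Nat.totient (LL t b) - 1)
def pe (i : ZMod t) : ℕ := (i.val / gg t b * cI t b) % LL t b
def AA : ZMod t := ((b - 1 : ℕ) : ZMod t)
def BB : ZMod t := ((b : ℕ) : ZMod t)
def ev (i : ZMod t) : ℕ := i.val % 2
def pp (i : ZMod t) : ℕ := if ev t i = 0 then pe t b i else pe t b (i - AA t b)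
def rung (i : ZMod t) : ZMod t := if ev t i = 0 then i + AA t b else i - AA t b
def f0 (i : ZMod t) : ZMod t := if ev t i = 0 then i - AA t b else i + AA t b
def f1 (i : ZMod t) : ZMod t :=
  if pp t b i % 2 = 0 then (if pp t b i = LL t b - 1 then rung t b i else i + BB t b)
  else i - BB t b
def f2 (i : ZMod t) : ZMod t :=
  if pp t b i = 0 then rung t b i
  else if pp t b i % 2 = 1 then (if pp t b i = LL t b - 1 then rung t b i else i + BB t b)
  else i - BB t b
def f3 (i : ZMod t) : ZMod t :=
  if pp t b i = LL t b - 1 then i + BB t b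
  else if pp t b i = 0 then i - BB t b
  else rung t b i

section lemmas

variable (ht : 2 ∣ t) (hb : 2 ∣ b) (hb2 : 2 ≤ b) (hbt : 2 * b < t)

lemma tpos : 0 < t := Nat.pos_of_ne_zero (NeZero.ne t)

include hb2 in
lemma ggpos : 0 < gg t b := Nat.gcd_pos_of_pos_left _ (by omega)

include hb2 in
lemma tfact : t = gg t b * LL t b := (Nat.mul_div_cancel' (Nat.gcd_dvd_right b t)).symm

include hb2 in
lemma bfact : b = gg t b * bq t b := (Nat.mul_div_cancel' (Nat.gcd_dvd_left b t)).symm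

include hb2 hbt in
lemma LLpos : 0 < LL t b := by
  have h1 := tfact t b hb2
  have h2 := tpos t
  rcases Nat.eq_zero_or_pos (LL t b) with h | h
  · rw [h, Nat.mul_zero] at h1; omega
  · exact h

include hb2 hbt in
lemma LL3 : 3 ≤ LL t b := by
  have h1 := tfact t b hb2
  have h2 := bfact t b hb2
  have h3 := ggpos t b hb2
  have hgb : gg t b ≤ b := Nat.le_of_dvd (by omega) (Nat.gcd_dvd_left b t)
  rcases Nat.lt_or_ge (LL t b) 3 with h | h
  · interval_cases h' : LL t b <;> omega
  · exact h

include hb2 hbt in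
lemma cImod : bq t b * cI t b ≡ 1 [MOD LL t b] := by
  have hco : Nat.Coprime (bq t b) (LL t b) :=
    Nat.coprime_div_gcd_div_gcd (ggpos t b hb2)
  have hphi : 1 ≤ Nat.totient (LL t b) := Nat.totient_pos.mpr (LLpos t b hb2 hbt)
  have h1 : bq t b * cI t b = bq t b ^ Nat.totient (LL t b) := by
    rw [cI, ← pow_succ']
    congr 1
    omega
  rw [h1]
  exact Nat.ModEq.pow_totient hco

include hbt in
lemma val_BB : (BB t b).val = b := ZMod.val_natCast_of_lt (by omega)

include hbt in
lemma val_AA : (AA t b).val = b - 1 := ZMod.val_natCast_of_lt (by omega)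

include hb2 hbt in
lemma peB (i : ZMod t) : pe t b (i + BB t b) = (pe t b i + 1) % LL t b := by
  have htpos := tpos t
  have hgpos := ggpos t b hb2
  have htL := tfact t b hb2
  have hbb := bfact t b hb2
  have hLpos := LLpos t b hb2 hbt
  have hmod1 := cImod t b hb2 hbt
  set g := gg t b
  set L := LL t b
  set b' := bq t b
  have hval : (i + BB t b).val = (i.val + b) % t := by
    rw [ZMod.val_add, val_BB t b hbt]
  set v := i.val with hv
  have hvlt : v < t := i.val_lt
  set q := v / g with hq
  set r := v % g with hr
  have hvqr : g * q + r = v := Nat.div_add_mod v g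
  have hrg : r < g := Nat.mod_lt _ hgpos
  show ((i + BB t b).val / g * cI t b) % L = ((v / g * cI t b) % L + 1) % L
  rw [hval]
  rcases Nat.lt_or_ge (v + b) t with hcase | hcase
  · have h1 : (v + b) % t = v + b := Nat.mod_eq_of_lt hcase
    have h2 : (v + b) / g = q + b' := by
      conv_lhs => rw [hbb, Nat.add_mul_div_left _ _ hgpos]
    rw [h1, h2]
    exact modaux L (cI t b) b' q hmod1
  · have hge : L ≤ q + b' := by
      by_contra hcon
      push_neg at hcon
      have h7 : g * (q + b' + 1) ≤ g * L := Nat.mul_le_mul_left g (by omega)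
      have h5 : v + b = g * (q + b') + r := by rw [← hvqr, hbb]; ring
      have h8 : g * (q + b' + 1) = g * (q + b') + g := by ring
      omega
    have hXZ : g * L ≤ g * (q + b') := Nat.mul_le_mul_left g hge
    have h1 : (v + b) % t = v + b - t := by
      rw [Nat.mod_eq_sub_mod (by omega), Nat.mod_eq_of_lt (by omega)]
    have e1 : v + b - t = g * (q + b' - L) + r := by
      have h5 : v + b = g * (q + b') + r := by rw [← hvqr, hbb]; ring
      have h6 : g * (q + b' - L) = g * (q + b') - g * L := Nat.mul_sub g (q + b') L
      omega
    have h2 : (v + b - t) / g = q + b' - L := by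
      rw [e1, Nat.mul_add_div hgpos, Nat.div_eq_of_lt hrg, Nat.add_zero]
    rw [h1, h2]
    have h4 : ((q + b' - L) * cI t b) % L = ((q + b') * cI t b) % L := by
      conv_rhs => rw [show q + b' = (q + b' - L) + L from by omega, add_mul,
        Nat.add_mul_mod_self_left]
    rw [h4]
    exact modaux L (cI t b) b' q hmod1


include ht in
lemma ev_add (x y : ZMod t) : ev t (x + y) = (ev t x + ev t y) % 2 := by
  unfold ev
  rw [ZMod.val_add, Nat.mod_mod_of_dvd _ ht, Nat.add_mod]

include ht in
lemma ev_neg (x : ZMod t) : ev t (-x) = ev t x := by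
  unfold ev
  rw [ZMod.neg_val]
  split
  · next h => rw [h, ZMod.val_zero]
  · have h1 : x.val < t := x.val_lt
    omega

include ht in
lemma ev_sub (x y : ZMod t) : ev t (x - y) = (ev t x + ev t y) % 2 := by
  rw [sub_eq_add_neg, ev_add t ht, ev_neg t ht]

lemma ev_lt2 (x : ZMod t) : ev t x < 2 := Nat.mod_lt _ (by omega)

include hb hb2 hbt in
lemma ev_AA : ev t (AA t b) = 1 := by
  unfold ev
  rw [val_AA t b hbt]
  omega

include hb hbt in
lemma ev_BB : ev t (BB t b) = 0 := by
  unfold ev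
  rw [val_BB t b hbt]
  omega

include ht hb hb2 hbt in
lemma ev_addAA (i : ZMod t) : ev t (i + AA t b) = (ev t i + 1) % 2 := by
  rw [ev_add t ht, ev_AA t b hb hb2 hbt]

include ht hb hb2 hbt in
lemma ev_subAA (i : ZMod t) : ev t (i - AA t b) = (ev t i + 1) % 2 := by
  rw [ev_sub t ht, ev_AA t b hb hb2 hbt]

include ht hb hbt in
lemma ev_addBB (i : ZMod t) : ev t (i + BB t b) = ev t i := by
  rw [ev_add t ht, ev_BB t b hb hbt, Nat.add_zero, Nat.mod_eq_of_lt (ev_lt2 t i)]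

include ht hb hbt in
lemma ev_subBB (i : ZMod t) : ev t (i - BB t b) = ev t i := by
  rw [ev_sub t ht, ev_BB t b hb hbt, Nat.add_zero, Nat.mod_eq_of_lt (ev_lt2 t i)]

include hb2 hbt in
lemma pp_lt (i : ZMod t) : pp t b i < LL t b := by
  have h := LLpos t b hb2 hbt
  unfold pp pe
  split <;> exact Nat.mod_lt _ h

include ht hb hb2 hbt in
lemma pp_addBB (i : ZMod t) : pp t b (i + BB t b) = (pp t b i + 1) % LL t b := by
  unfold pp
  rw [ev_addBB t b ht hb hbt]
  split
  · exact peB t b hb2 hbt i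
  · have h1 : i + BB t b - AA t b = (i - AA t b) + BB t b := by ring
    rw [h1]
    exact peB t b hb2 hbt (i - AA t b)

include ht hb hb2 hbt in
lemma pp_subBB (i : ZMod t) : (pp t b (i - BB t b) + 1) % LL t b = pp t b i := by
  have h1 := pp_addBB t b ht hb hb2 hbt (i - BB t b)
  rw [sub_add_cancel] at h1
  omega

include ht hb hb2 hbt in
lemma pp_rung (i : ZMod t) : pp t b (rung t b i) = pp t b i := by
  have hev := ev_lt2 t i
  unfold rung
  split
  · next h =>
    unfold pp
    rw [ev_addAA t b ht hb hb2 hbt, h]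
    norm_num
  · next h =>
    unfold pp
    rw [ev_subAA t b ht hb hb2 hbt]
    have h1 : ev t i = 1 := by omega
    rw [h1]
    norm_num

include ht hb hb2 hbt in
lemma rung_rung (i : ZMod t) : rung t b (rung t b i) = i := by
  have hev := ev_lt2 t i
  unfold rung
  split
  · next h =>
    rw [ev_addAA t b ht hb hb2 hbt, h]
    norm_num
  · next h =>
    rw [ev_subAA t b ht hb hb2 hbt]
    have h1 : ev t i = 1 := by omega
    rw [h1]
    norm_num


include ht hb hb2 hbt in
lemma f0_invol (i : ZMod t) : f0 t b (f0 t b i) = i := by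
  have hev := ev_lt2 t i
  by_cases h : ev t i = 0
  · have e1 : f0 t b i = i - AA t b := by unfold f0; rw [if_pos h]
    have e2 : ev t (i - AA t b) = 1 := by
      rw [ev_subAA t b ht hb hb2 hbt, h]
    rw [e1]
    unfold f0
    rw [if_neg (by omega)]
    exact sub_add_cancel i (AA t b)
  · have e1 : f0 t b i = i + AA t b := by unfold f0; rw [if_neg h]
    have e2 : ev t (i + AA t b) = 0 := by
      rw [ev_addAA t b ht hb hb2 hbt]
      omega
    rw [e1]
    unfold f0
    rw [if_pos e2]
    exact add_sub_cancel_right i (AA t b)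

include ht hb hb2 hbt in
lemma f1_invol (i : ZMod t) : f1 t b (f1 t b i) = i := by
  have hL := LL3 t b hb2 hbt
  have hpi := pp_lt t b hb2 hbt i
  by_cases hpar : pp t b i % 2 = 0
  · by_cases hL1 : pp t b i = LL t b - 1
    · have e1 : f1 t b i = rung t b i := by unfold f1; rw [if_pos hpar, if_pos hL1]
      have e2 : pp t b (rung t b i) = pp t b i := pp_rung t b ht hb hb2 hbt i
      rw [e1]
      unfold f1
      rw [e2, if_pos hpar, if_pos hL1]
      exact rung_rung t b ht hb hb2 hbt i
    · have e1 : f1 t b i = i + BB t b := by unfold f1; rw [if_pos hpar, if_neg hL1]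
      have e2 : pp t b (i + BB t b) = pp t b i + 1 := by
        rw [pp_addBB t b ht hb hb2 hbt, Nat.mod_eq_of_lt (by omega)]
      rw [e1]
      unfold f1
      rw [e2, if_neg (by omega)]
      exact add_sub_cancel_right i (BB t b)
  · have e1 : f1 t b i = i - BB t b := by unfold f1; rw [if_neg hpar]
    have e2 := pp_subBB t b ht hb hb2 hbt i
    have hx := pp_lt t b hb2 hbt (i - BB t b)
    rcases succ_mod_cases _ _ _ hx e2 with ⟨h1, h2⟩ | ⟨h1, h2⟩
    · omega
    · rw [e1]
      unfold f1
      rw [if_pos (by omega), if_neg (by omega)]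
      exact sub_add_cancel i (BB t b)

include ht hb hb2 hbt in
lemma f2_invol (i : ZMod t) : f2 t b (f2 t b i) = i := by
  have hL := LL3 t b hb2 hbt
  have hpi := pp_lt t b hb2 hbt i
  by_cases h0 : pp t b i = 0
  · have e1 : f2 t b i = rung t b i := by unfold f2; rw [if_pos h0]
    have e2 : pp t b (rung t b i) = pp t b i := pp_rung t b ht hb hb2 hbt i
    rw [e1]
    unfold f2
    rw [e2, if_pos h0]
    exact rung_rung t b ht hb hb2 hbt i
  · by_cases hpar : pp t b i % 2 = 1
    · by_cases hL1 : pp t b i = LL t b - 1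
      · have e1 : f2 t b i = rung t b i := by
          unfold f2; rw [if_neg h0, if_pos hpar, if_pos hL1]
        have e2 : pp t b (rung t b i) = pp t b i := pp_rung t b ht hb hb2 hbt i
        rw [e1]
        unfold f2
        rw [e2, if_neg h0, if_pos hpar, if_pos hL1]
        exact rung_rung t b ht hb hb2 hbt i
      · have e1 : f2 t b i = i + BB t b := by
          unfold f2; rw [if_neg h0, if_pos hpar, if_neg hL1]
        have e2 : pp t b (i + BB t b) = pp t b i + 1 := by
          rw [pp_addBB t b ht hb hb2 hbt, Nat.mod_eq_of_lt (by omega)]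
        rw [e1]
        unfold f2
        rw [e2, if_neg (by omega), if_neg (by omega)]
        exact add_sub_cancel_right i (BB t b)
    · have e1 : f2 t b i = i - BB t b := by unfold f2; rw [if_neg h0, if_neg hpar]
      have e2 := pp_subBB t b ht hb hb2 hbt i
      have hx := pp_lt t b hb2 hbt (i - BB t b)
      rcases succ_mod_cases _ _ _ hx e2 with ⟨h1, h2⟩ | ⟨h1, h2⟩
      · omega
      · rw [e1]
        unfold f2
        rw [if_neg (by omega), if_pos (by omega), if_neg (by omega)]
        exact sub_add_cancel i (BB t b)

include ht hb hb2 hbt in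
lemma f3_invol (i : ZMod t) : f3 t b (f3 t b i) = i := by
  have hL := LL3 t b hb2 hbt
  have hpi := pp_lt t b hb2 hbt i
  by_cases hL1 : pp t b i = LL t b - 1
  · have e1 : f3 t b i = i + BB t b := by unfold f3; rw [if_pos hL1]
    have e2 : pp t b (i + BB t b) = 0 := by
      rw [pp_addBB t b ht hb hb2 hbt, hL1, Nat.sub_add_cancel (by omega), Nat.mod_self]
    rw [e1]
    unfold f3
    rw [e2, if_neg (by omega), if_pos rfl]
    exact add_sub_cancel_right i (BB t b)
  · by_cases h0 : pp t b i = 0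
    · have e1 : f3 t b i = i - BB t b := by unfold f3; rw [if_neg hL1, if_pos h0]
      have e2 := pp_subBB t b ht hb hb2 hbt i
      have hx := pp_lt t b hb2 hbt (i - BB t b)
      rcases succ_mod_cases _ _ _ hx e2 with ⟨h1, h2⟩ | ⟨h1, h2⟩
      · rw [e1]
        unfold f3
        rw [if_pos (by omega)]
        exact sub_add_cancel i (BB t b)
      · omega
    · have e1 : f3 t b i = rung t b i := by unfold f3; rw [if_neg hL1, if_neg h0]
      have e2 : pp t b (rung t b i) = pp t b i := pp_rung t b ht hb hb2 hbt i
      rw [e1]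
      unfold f3
      rw [e2, if_neg hL1, if_neg h0]
      exact rung_rung t b ht hb hb2 hbt i

include hb2 hbt in
lemma AA_ne : AA t b ≠ 0 := by
  intro h
  have := congrArg ZMod.val h
  rw [val_AA t b hbt, ZMod.val_zero] at this
  omega

include hb2 hbt in
lemma BB_ne : BB t b ≠ 0 := by
  intro h
  have := congrArg ZMod.val h
  rw [val_BB t b hbt, ZMod.val_zero] at this
  omega

include hb2 hbt in
lemma rung_ne (i : ZMod t) : rung t b i ≠ i := by
  unfold rung
  split
  · intro h; exact AA_ne t b hb2 hbt (add_eq_left.mp h)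
  · intro h; exact AA_ne t b hb2 hbt (sub_eq_self.mp h)

include hb2 hbt in
lemma f0_ne (i : ZMod t) : f0 t b i ≠ i := by
  unfold f0
  split
  · intro h; exact AA_ne t b hb2 hbt (sub_eq_self.mp h)
  · intro h; exact AA_ne t b hb2 hbt (add_eq_left.mp h)

include hb2 hbt in
lemma f1_ne (i : ZMod t) : f1 t b i ≠ i := by
  unfold f1
  split
  · split
    · exact rung_ne t b hb2 hbt i
    · intro h; exact BB_ne t b hb2 hbt (add_eq_left.mp h)
  · intro h; exact BB_ne t b hb2 hbt (sub_eq_self.mp h)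

include hb2 hbt in
lemma f2_ne (i : ZMod t) : f2 t b i ≠ i := by
  unfold f2
  split
  · exact rung_ne t b hb2 hbt i
  · split
    · split
      · exact rung_ne t b hb2 hbt i
      · intro h; exact BB_ne t b hb2 hbt (add_eq_left.mp h)
    · intro h; exact BB_ne t b hb2 hbt (sub_eq_self.mp h)

include hb2 hbt in
lemma f3_ne (i : ZMod t) : f3 t b i ≠ i := by
  unfold f3
  split
  · intro h; exact BB_ne t b hb2 hbt (add_eq_left.mp h)
  · split
    · intro h; exact BB_ne t b hb2 hbt (sub_eq_self.mp h)
    · exact rung_ne t b hb2 hbt i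


omit ht hb hb2 hbt

def fP : Fin 4 → ZMod t → ZMod t := fun k =>
  match k with
  | 0 => f0 t b
  | 1 => f1 t b
  | 2 => f2 t b
  | 3 => f3 t b

lemma rung_or (i : ZMod t) :
    rung t b i = i + AA t b ∨ rung t b i = i - AA t b := by
  unfold rung; split
  · exact Or.inl rfl
  · exact Or.inr rfl

lemma f0_or (i : ZMod t) :
    f0 t b i = i + AA t b ∨ f0 t b i = i - AA t b ∨
    f0 t b i = i + BB t b ∨ f0 t b i = i - BB t b := by
  unfold f0; split
  · exact Or.inr (Or.inl rfl)
  · exact Or.inl rfl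

lemma f1_or (i : ZMod t) :
    f1 t b i = i + AA t b ∨ f1 t b i = i - AA t b ∨
    f1 t b i = i + BB t b ∨ f1 t b i = i - BB t b := by
  unfold f1; split
  · split
    · rcases rung_or t b i with h | h
      · exact Or.inl h
      · exact Or.inr (Or.inl h)
    · exact Or.inr (Or.inr (Or.inl rfl))
  · exact Or.inr (Or.inr (Or.inr rfl))

lemma f2_or (i : ZMod t) :
    f2 t b i = i + AA t b ∨ f2 t b i = i - AA t b ∨
    f2 t b i = i + BB t b ∨ f2 t b i = i - BB t b := by
  unfold f2; split
  · rcases rung_or t b i with h | h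
    · exact Or.inl h
    · exact Or.inr (Or.inl h)
  · split
    · split
      · rcases rung_or t b i with h | h
        · exact Or.inl h
        · exact Or.inr (Or.inl h)
      · exact Or.inr (Or.inr (Or.inl rfl))
    · exact Or.inr (Or.inr (Or.inr rfl))

lemma f3_or (i : ZMod t) :
    f3 t b i = i + AA t b ∨ f3 t b i = i - AA t b ∨
    f3 t b i = i + BB t b ∨ f3 t b i = i - BB t b := by
  unfold f3; split
  · exact Or.inr (Or.inr (Or.inl rfl))
  · split
    · exact Or.inr (Or.inr (Or.inr rfl))
    · rcases rung_or t b i with h | h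
      · exact Or.inl h
      · exact Or.inr (Or.inl h)

lemma fP_or (k : Fin 4) (i : ZMod t) :
    fP t b k i = i + AA t b ∨ fP t b k i = i - AA t b ∨
    fP t b k i = i + BB t b ∨ fP t b k i = i - BB t b := by
  fin_cases k
  · exact f0_or t b i
  · exact f1_or t b i
  · exact f2_or t b i
  · exact f3_or t b i

section exi

variable (ht : 2 ∣ t) (hb : 2 ∣ b) (hb2 : 2 ≤ b) (hbt : 2 * b < t)

include hb2 hbt in
lemma ex_rung (i : ZMod t) : ∃ k : Fin 4, fP t b k i = rung t b i := by
  have hL := LL3 t b hb2 hbt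
  have hpi := pp_lt t b hb2 hbt i
  by_cases h0 : pp t b i = 0
  · exact ⟨2, by show f2 t b i = rung t b i; unfold f2; rw [if_pos h0]⟩
  · by_cases hL1 : pp t b i = LL t b - 1
    · by_cases hpar : pp t b i % 2 = 0
      · exact ⟨1, by show f1 t b i = rung t b i; unfold f1; rw [if_pos hpar, if_pos hL1]⟩
      · exact ⟨2, by
          show f2 t b i = rung t b i
          unfold f2
          rw [if_neg h0, if_pos (by omega), if_pos hL1]⟩
    · exact ⟨3, by show f3 t b i = rung t b i; unfold f3; rw [if_neg hL1, if_neg h0]⟩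

include hb2 hbt in
lemma ex_addBB (i : ZMod t) : ∃ k : Fin 4, fP t b k i = i + BB t b := by
  have hL := LL3 t b hb2 hbt
  have hpi := pp_lt t b hb2 hbt i
  by_cases hL1 : pp t b i = LL t b - 1
  · exact ⟨3, by show f3 t b i = i + BB t b; unfold f3; rw [if_pos hL1]⟩
  · by_cases hpar : pp t b i % 2 = 0
    · exact ⟨1, by show f1 t b i = i + BB t b; unfold f1; rw [if_pos hpar, if_neg hL1]⟩
    · exact ⟨2, by
        show f2 t b i = i + BB t b
        unfold f2
        rw [if_neg (by omega), if_pos (by omega), if_neg hL1]⟩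

include hb2 hbt in
lemma ex_subBB (i : ZMod t) : ∃ k : Fin 4, fP t b k i = i - BB t b := by
  have hL := LL3 t b hb2 hbt
  have hpi := pp_lt t b hb2 hbt i
  by_cases h0 : pp t b i = 0
  · exact ⟨3, by show f3 t b i = i - BB t b; unfold f3; rw [if_neg (by omega), if_pos h0]⟩
  · by_cases hpar : pp t b i % 2 = 1
    · exact ⟨1, by show f1 t b i = i - BB t b; unfold f1; rw [if_neg (by omega)]⟩
    · exact ⟨2, by show f2 t b i = i - BB t b; unfold f2; rw [if_neg h0, if_neg hpar]⟩

include ht hb hb2 hbt in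
lemma ex_addAA (i : ZMod t) : ∃ k : Fin 4, fP t b k i = i + AA t b := by
  by_cases h : ev t i = 0
  · obtain ⟨k, hk⟩ := ex_rung t b hb2 hbt i
    exact ⟨k, by rw [hk]; unfold rung; rw [if_pos h]⟩
  · exact ⟨0, by show f0 t b i = i + AA t b; unfold f0; rw [if_neg h]⟩

include ht hb hb2 hbt in
lemma ex_subAA (i : ZMod t) : ∃ k : Fin 4, fP t b k i = i - AA t b := by
  by_cases h : ev t i = 0
  · exact ⟨0, by show f0 t b i = i - AA t b; unfold f0; rw [if_pos h]⟩
  · obtain ⟨k, hk⟩ := ex_rung t b hb2 hbt i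
    exact ⟨k, by rw [hk]; unfold rung; rw [if_neg h]⟩

end exi
end lemmas
end St18

namespace St18

theorem pair_exists (t b : ℕ) [NeZero t] (ht : 2 ∣ t) (hb : 2 ∣ b) (hb2 : 2 ≤ b)
    (hbt : 2 * b < t) :
    ∃ F : Fin 4 → Equiv.Perm (ZMod t),
      (∀ k, F k * F k = 1) ∧ (∀ k i, F k i ≠ i) ∧
      (∀ k i, F k i = i + ((b - 1 : ℕ) : ZMod t) ∨ F k i = i - ((b - 1 : ℕ) : ZMod t) ∨
        F k i = i + ((b : ℕ) : ZMod t) ∨ F k i = i - ((b : ℕ) : ZMod t)) ∧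
      (∀ i, ∃ k, F k i = i + ((b - 1 : ℕ) : ZMod t)) ∧
      (∀ i, ∃ k, F k i = i - ((b - 1 : ℕ) : ZMod t)) ∧
      (∀ i, ∃ k, F k i = i + ((b : ℕ) : ZMod t)) ∧
      (∀ i, ∃ k, F k i = i - ((b : ℕ) : ZMod t)) := by
  have hinv : ∀ k : Fin 4, Function.Involutive (fP t b k) := by
    intro k
    fin_cases k
    · exact f0_invol t b ht hb hb2 hbt
    · exact f1_invol t b ht hb hb2 hbt
    · exact f2_invol t b ht hb hb2 hbt
    · exact f3_invol t b ht hb hb2 hbt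
  refine ⟨fun k => Function.Involutive.toPerm _ (hinv k), ?_, ?_, ?_, ?_, ?_, ?_, ?_⟩
  · intro k
    ext i
    simp only [Equiv.Perm.mul_apply, Function.Involutive.coe_toPerm, Equiv.Perm.coe_one, id_eq]
    exact hinv k i
  · intro k i
    show fP t b k i ≠ i
    fin_cases k
    · exact f0_ne t b hb2 hbt i
    · exact f1_ne t b hb2 hbt i
    · exact f2_ne t b hb2 hbt i
    · exact f3_ne t b hb2 hbt i
  · intro k i
    exact fP_or t b k i
  · intro i; exact ex_addAA t b ht hb hb2 hbt i
  · intro i; exact ex_subAA t b ht hb hb2 hbt i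
  · intro i; exact ex_addBB t b hb2 hbt i
  · intro i; exact ex_subBB t b hb2 hbt i

end St18

namespace St18

def gA (t c : ℕ) : ZMod t → ZMod t :=
  fun i => if ev t i = 0 then i + (c : ZMod t) else i - (c : ZMod t)

def gB (t c : ℕ) : ZMod t → ZMod t :=
  fun i => if ev t i = 0 then i - (c : ZMod t) else i + (c : ZMod t)

def gP (t c : ℕ) : Fin 2 → ZMod t → ZMod t := fun k =>
  match k with
  | 0 => gA t c
  | 1 => gB t c

theorem leftover_exists (t c : ℕ) [NeZero t] (ht : 2 ∣ t) (hc : c % 2 = 1) (hct : c < t) :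
    ∃ F : Fin 2 → Equiv.Perm (ZMod t),
      (∀ k, F k * F k = 1) ∧ (∀ k i, F k i ≠ i) ∧
      (∀ k i, F k i = i + ((c : ℕ) : ZMod t) ∨ F k i = i - ((c : ℕ) : ZMod t)) ∧
      (∀ i, ∃ k, F k i = i + ((c : ℕ) : ZMod t)) ∧
      (∀ i, ∃ k, F k i = i - ((c : ℕ) : ZMod t)) := by
  have hvC : ((c : ℕ) : ZMod t).val = c := ZMod.val_natCast_of_lt hct
  have hevC : ev t ((c : ℕ) : ZMod t) = 1 := by unfold ev; rw [hvC]; exact hc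
  have hCne : ((c : ℕ) : ZMod t) ≠ 0 := by
    intro h
    have := congrArg ZMod.val h
    rw [hvC, ZMod.val_zero] at this
    omega
  have hev1 : ∀ i : ZMod t, ev t (i + ((c : ℕ) : ZMod t)) = (ev t i + 1) % 2 := fun i => by
    rw [ev_add t ht, hevC]
  have hev2 : ∀ i : ZMod t, ev t (i - ((c : ℕ) : ZMod t)) = (ev t i + 1) % 2 := fun i => by
    rw [ev_sub t ht, hevC]
  have hinvA : Function.Involutive (gA t c) := by
    intro i
    have h2 := ev_lt2 t i
    by_cases h : ev t i = 0
    · have e1 : gA t c i = i + (c : ZMod t) := by unfold gA; rw [if_pos h]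
      rw [e1]
      unfold gA
      rw [if_neg (by rw [hev1 i]; omega)]
      exact add_sub_cancel_right i _
    · have e1 : gA t c i = i - (c : ZMod t) := by unfold gA; rw [if_neg h]
      rw [e1]
      unfold gA
      rw [if_pos (by rw [hev2 i]; omega)]
      exact sub_add_cancel i _
  have hinvB : Function.Involutive (gB t c) := by
    intro i
    have h2 := ev_lt2 t i
    by_cases h : ev t i = 0
    · have e1 : gB t c i = i - (c : ZMod t) := by unfold gB; rw [if_pos h]
      rw [e1]
      unfold gB
      rw [if_neg (by rw [hev2 i]; omega)]
      exact sub_add_cancel i _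
    · have e1 : gB t c i = i + (c : ZMod t) := by unfold gB; rw [if_neg h]
      rw [e1]
      unfold gB
      rw [if_pos (by rw [hev1 i]; omega)]
      exact add_sub_cancel_right i _
  have hinv : ∀ k : Fin 2, Function.Involutive (gP t c k) := by
    intro k
    fin_cases k
    · exact hinvA
    · exact hinvB
  refine ⟨fun k => Function.Involutive.toPerm _ (hinv k), ?_, ?_, ?_, ?_, ?_⟩
  · intro k
    ext i
    simp only [Equiv.Perm.mul_apply, Function.Involutive.coe_toPerm, Equiv.Perm.coe_one, id_eq]
    exact hinv k i
  · intro k i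
    show gP t c k i ≠ i
    fin_cases k
    · show gA t c i ≠ i
      unfold gA
      split
      · intro h; exact hCne (add_eq_left.mp h)
      · intro h; exact hCne (sub_eq_self.mp h)
    · show gB t c i ≠ i
      unfold gB
      split
      · intro h; exact hCne (sub_eq_self.mp h)
      · intro h; exact hCne (add_eq_left.mp h)
  · intro k i
    show gP t c k i = _ ∨ gP t c k i = _
    fin_cases k
    · show gA t c i = _ ∨ gA t c i = _
      unfold gA
      split
      · exact Or.inl rfl
      · exact Or.inr rfl
    · show gB t c i = _ ∨ gB t c i = _
      unfold gB
      split
      · exact Or.inr rfl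
      · exact Or.inl rfl
  · intro i
    by_cases h : ev t i = 0
    · exact ⟨0, by show gA t c i = _; unfold gA; rw [if_pos h]⟩
    · exact ⟨1, by show gB t c i = _; unfold gB; rw [if_neg h]⟩
  · intro i
    by_cases h : ev t i = 0
    · exact ⟨1, by show gB t c i = _; unfold gB; rw [if_pos h]⟩
    · exact ⟨0, by show gA t c i = _; unfold gA; rw [if_neg h]⟩

theorem shift_exists (t : ℕ) [NeZero t] (ht : 2 ∣ t) (h2 : 2 ≤ t) :
    ∃ F : Equiv.Perm (ZMod t), F * F = 1 ∧ (∀ i, F i ≠ i) ∧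
      (∀ i, F i = i + ((t / 2 : ℕ) : ZMod t)) := by
  have hvH : ((t / 2 : ℕ) : ZMod t).val = t / 2 := ZMod.val_natCast_of_lt (by omega)
  have hHne : ((t / 2 : ℕ) : ZMod t) ≠ 0 := by
    intro h
    have := congrArg ZMod.val h
    rw [hvH, ZMod.val_zero] at this
    omega
  have hHH : ((t / 2 : ℕ) : ZMod t) + ((t / 2 : ℕ) : ZMod t) = 0 := by
    rw [← Nat.cast_add]
    have : t / 2 + t / 2 = t := by omega
    rw [this, ZMod.natCast_self]
  have hinv : Function.Involutive (fun i : ZMod t => i + ((t / 2 : ℕ) : ZMod t)) := by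
    intro i
    simp only
    rw [add_assoc, hHH, add_zero]
  refine ⟨Function.Involutive.toPerm _ hinv, ?_, ?_, ?_⟩
  · ext i
    simp only [Equiv.Perm.mul_apply, Function.Involutive.coe_toPerm, Equiv.Perm.coe_one, id_eq]
    exact hinv i
  · intro i h
    exact hHne (add_eq_left.mp h)
  · intro i
    rfl

lemma mem_pmSet_iff {t lo hi : ℕ} [NeZero t] (x : ZMod t) :
    x ∈ pmSet t lo hi ↔ ∃ ν, lo ≤ ν ∧ ν ≤ hi ∧ (x = (ν : ZMod t) ∨ x = -(ν : ZMod t)) := by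
  simp only [pmSet, Finset.mem_union, Finset.mem_image, Finset.mem_Icc]
  constructor
  · rintro (⟨ν, ⟨h1, h2⟩, rfl⟩ | ⟨ν, ⟨h1, h2⟩, rfl⟩)
    · exact ⟨ν, h1, h2, Or.inl rfl⟩
    · exact ⟨ν, h1, h2, Or.inr rfl⟩
  · rintro ⟨ν, h1, h2, rfl | rfl⟩
    · exact Or.inl ⟨ν, ⟨h1, h2⟩, rfl⟩
    · exact Or.inr ⟨ν, ⟨h1, h2⟩, rfl⟩

lemma pmSet_card (t m : ℕ) [NeZero t] (h : 2 * m < t) : (pmSet t 1 m).card = 2 * m := by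
  have hval : ∀ ν, ν ∈ Finset.Icc 1 m → ((ν : ZMod t)).val = ν := by
    intro ν hν
    rw [Finset.mem_Icc] at hν
    exact ZMod.val_natCast_of_lt (by omega)
  have hinj1 : Set.InjOn (fun j : ℕ => (j : ZMod t)) (Finset.Icc 1 m) := by
    intro a ha b hb hab
    have := congrArg ZMod.val hab
    simp only at this
    rwa [hval a ha, hval b hb] at this
  have hinj2 : Set.InjOn (fun j : ℕ => -(j : ZMod t)) (Finset.Icc 1 m) := by
    intro a ha b hb hab
    simp only [neg_inj] at hab
    exact hinj1 ha hb hab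
  have hdis : Disjoint ((Finset.Icc 1 m).image fun j : ℕ => (j : ZMod t))
      ((Finset.Icc 1 m).image fun j : ℕ => -(j : ZMod t)) := by
    rw [Finset.disjoint_left]
    rintro x hx1 hx2
    rw [Finset.mem_image] at hx1 hx2
    obtain ⟨a, ha, rfl⟩ := hx1
    obtain ⟨c, hc, hac⟩ := hx2
    rw [Finset.mem_Icc] at ha hc
    have hzero : ((c + a : ℕ) : ZMod t) = 0 := by
      push_cast
      rw [← hac]
      ring
    have hdvd : t ∣ c + a := (ZMod.natCast_eq_zero_iff _ _).mp hzero
    have := Nat.le_of_dvd (by omega) hdvd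
    omega
  rw [pmSet, Finset.card_union_of_disjoint hdis, Finset.card_image_of_injOn hinj1,
    Finset.card_image_of_injOn hinj2, Nat.card_Icc]
  omega

lemma half_notMem (t m : ℕ) [NeZero t] (h : 2 * m < t) (ht : 2 ∣ t) :
    ((t / 2 : ℕ) : ZMod t) ∉ pmSet t 1 m := by
  have htpos : 0 < t := Nat.pos_of_ne_zero (NeZero.ne t)
  rw [mem_pmSet_iff]
  rintro ⟨ν, h1, h2, hx | hx⟩
  · have := congrArg ZMod.val hx
    rw [ZMod.val_natCast_of_lt (by omega), ZMod.val_natCast_of_lt (by omega)] at this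
    omega
  · have hzero : ((t / 2 + ν : ℕ) : ZMod t) = 0 := by
      push_cast
      rw [hx]
      ring
    have hdvd : t ∣ t / 2 + ν := (ZMod.natCast_eq_zero_iff _ _).mp hzero
    have := Nat.le_of_dvd (by omega) hdvd
    omega

end St18

/-- Lemma: for t even and 2 ≤ s < t, the directed circulant Circ(t; D), with
D = {±1,…,±(s−1)/2} for odd s and D = {±1,…,±(s/2−1)} ∪ {t/2} for even s,
admits a C₂-factorization. -/
theorem stmt18 (s t : ℕ) (hs : 2 ≤ s) (hst : s < t) (hte : Even t) [NeZero t]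
    (D : Finset (ZMod t))
    (hD : D = if s % 2 = 1 then pmSet t 1 ((s - 1) / 2)
              else insert ((t / 2 : ℕ) : ZMod t) (pmSet t 1 (s / 2 - 1))) :
    CirculantC2Factorization t D := by
  classical
  have ht : 2 ∣ t := hte.two_dvd
  set m : ℕ := if s % 2 = 1 then (s - 1) / 2 else s / 2 - 1 with hm
  set e : ℕ := if s % 2 = 1 then 0 else 1 with he
  have hcase : (s % 2 = 1 ∧ m = (s - 1) / 2 ∧ e = 0) ∨
      (s % 2 = 0 ∧ m = s / 2 - 1 ∧ e = 1) := by
    rcases Nat.mod_two_eq_zero_or_one s with hp | hp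
    · right; refine ⟨hp, ?_, ?_⟩ <;> simp [hm, he, hp]
    · left; refine ⟨hp, ?_, ?_⟩ <;> simp [hm, he, hp]
  have hmt : 2 * m < t := by
    rcases hcase with ⟨hp, h1, h2⟩ | ⟨hp, h1, h2⟩ <;> omega
  have hD' : D = if s % 2 = 1 then pmSet t 1 m
      else insert ((t / 2 : ℕ) : ZMod t) (pmSet t 1 m) := by
    rcases hcase with ⟨hp, h1, h2⟩ | ⟨hp, h1, h2⟩
    · rw [hD, if_pos hp, if_pos hp, h1]
    · rw [hD, if_neg (by omega), if_neg (by omega), h1]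
  have hDmem : ∀ x : ZMod t, x ∈ D ↔
      ((∃ ν, 1 ≤ ν ∧ ν ≤ m ∧ (x = (ν : ZMod t) ∨ x = -(ν : ZMod t))) ∨
        (e = 1 ∧ x = ((t / 2 : ℕ) : ZMod t))) := by
    intro x
    rcases hcase with ⟨hp, h1, h2⟩ | ⟨hp, h1, h2⟩
    · rw [hD', if_pos hp, St18.mem_pmSet_iff]
      constructor
      · exact fun h => Or.inl h
      · rintro (h | ⟨h3, _⟩)
        · exact h
        · omega
    · rw [hD', if_neg (by omega), Finset.mem_insert, St18.mem_pmSet_iff]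
      constructor
      · rintro (h | h)
        · exact Or.inr ⟨h2, h⟩
        · exact Or.inl h
      · rintro (h | ⟨_, h⟩)
        · exact Or.inr h
        · exact Or.inl h
  have hDcard : D.card = 2 * m + e := by
    rcases hcase with ⟨hp, h1, h2⟩ | ⟨hp, h1, h2⟩
    · rw [hD', if_pos hp, St18.pmSet_card t m hmt, h2]
      omega
    · rw [hD', if_neg (by omega),
        Finset.card_insert_of_notMem (St18.half_notMem t m hmt ht),
        St18.pmSet_card t m hmt, h2]
  set P : ℕ := m / 2 with hP
  have h4P : 4 * P ≤ 2 * m := by omega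
  have hpair : ∀ r : ℕ, ∃ F : Fin 4 → Equiv.Perm (ZMod t), r < P →
      ((∀ k, F k * F k = 1) ∧ (∀ k i, F k i ≠ i) ∧
      (∀ k i, F k i = i + ((2 * r + 2 - 1 : ℕ) : ZMod t) ∨
        F k i = i - ((2 * r + 2 - 1 : ℕ) : ZMod t) ∨
        F k i = i + ((2 * r + 2 : ℕ) : ZMod t) ∨
        F k i = i - ((2 * r + 2 : ℕ) : ZMod t)) ∧
      (∀ i, ∃ k, F k i = i + ((2 * r + 2 - 1 : ℕ) : ZMod t)) ∧
      (∀ i, ∃ k, F k i = i - ((2 * r + 2 - 1 : ℕ) : ZMod t)) ∧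
      (∀ i, ∃ k, F k i = i + ((2 * r + 2 : ℕ) : ZMod t)) ∧
      (∀ i, ∃ k, F k i = i - ((2 * r + 2 : ℕ) : ZMod t))) := by
    intro r
    by_cases h : r < P
    · obtain ⟨F, hF⟩ := St18.pair_exists t (2 * r + 2) ht ⟨r + 1, by ring⟩ (by omega) (by omega)
      exact ⟨F, fun _ => hF⟩
    · exact ⟨fun _ => 1, fun hc => absurd hc h⟩
  choose FP hFP using hpair
  have hleftover : ∃ F : Fin 2 → Equiv.Perm (ZMod t), m % 2 = 1 →
      ((∀ k, F k * F k = 1) ∧ (∀ k i, F k i ≠ i) ∧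
      (∀ k i, F k i = i + ((m : ℕ) : ZMod t) ∨ F k i = i - ((m : ℕ) : ZMod t)) ∧
      (∀ i, ∃ k, F k i = i + ((m : ℕ) : ZMod t)) ∧
      (∀ i, ∃ k, F k i = i - ((m : ℕ) : ZMod t))) := by
    by_cases h : m % 2 = 1
    · obtain ⟨F, hF⟩ := St18.leftover_exists t m ht h (by omega)
      exact ⟨F, fun _ => hF⟩
    · exact ⟨fun _ => 1, fun hc => absurd hc h⟩
  obtain ⟨FL, hFL⟩ := hleftover
  have hshift : ∃ F : Equiv.Perm (ZMod t), e = 1 →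
      (F * F = 1 ∧ (∀ i, F i ≠ i) ∧ (∀ i, F i = i + ((t / 2 : ℕ) : ZMod t))) := by
    obtain ⟨F, hF⟩ := St18.shift_exists t ht (by omega)
    exact ⟨F, fun _ => hF⟩
  obtain ⟨FS, hFS⟩ := hshift
  set σ : Fin D.card → Equiv.Perm (ZMod t) := fun j =>
    if _h4 : (j : ℕ) < 4 * P then
      FP ((j : ℕ) / 4) ⟨(j : ℕ) % 4, Nat.mod_lt _ (by norm_num)⟩
    else if _h2m : (j : ℕ) < 2 * m then
      FL ⟨(j : ℕ) % 2, Nat.mod_lt _ (by norm_num)⟩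
    else FS with hσ
  have hσpair : ∀ j : Fin D.card, (j : ℕ) < 4 * P →
      σ j = FP ((j : ℕ) / 4) ⟨(j : ℕ) % 4, Nat.mod_lt _ (by norm_num)⟩ := by
    intro j hj
    simp only [hσ]
    rw [dif_pos hj]
  have hσleft : ∀ j : Fin D.card, 4 * P ≤ (j : ℕ) → (j : ℕ) < 2 * m →
      σ j = FL ⟨(j : ℕ) % 2, Nat.mod_lt _ (by norm_num)⟩ := by
    intro j hj1 hj2
    simp only [hσ]
    rw [dif_neg (by omega), dif_pos hj2]
  have hσshift : ∀ j : Fin D.card, 2 * m ≤ (j : ℕ) → σ j = FS := by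
    intro j hj
    simp only [hσ]
    rw [dif_neg (by omega), dif_neg (by omega)]
  have key : ∀ j : Fin D.card, (σ j * σ j = 1) ∧ (∀ i, σ j i ≠ i) ∧ (∀ i, σ j i - i ∈ D) := by
    intro j
    have hj : (j : ℕ) < 2 * m + e := by
      have h := j.isLt
      omega
    by_cases h4 : (j : ℕ) < 4 * P
    · have hr : (j : ℕ) / 4 < P := by omega
      obtain ⟨hi1, hi2, hi3, -, -, -, -⟩ := hFP ((j : ℕ) / 4) hr
      rw [hσpair j h4]
      refine ⟨hi1 _, fun i => hi2 _ i, fun i => ?_⟩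
      rcases hi3 ⟨(j : ℕ) % 4, Nat.mod_lt _ (by norm_num)⟩ i with hh | hh | hh | hh
      · rw [hh, add_sub_cancel_left]
        exact (hDmem _).mpr (Or.inl ⟨2 * ((j : ℕ) / 4) + 2 - 1, by omega, by omega, Or.inl rfl⟩)
      · rw [hh, sub_sub_cancel_left]
        exact (hDmem _).mpr (Or.inl ⟨2 * ((j : ℕ) / 4) + 2 - 1, by omega, by omega, Or.inr rfl⟩)
      · rw [hh, add_sub_cancel_left]
        exact (hDmem _).mpr (Or.inl ⟨2 * ((j : ℕ) / 4) + 2, by omega, by omega, Or.inl rfl⟩)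
      · rw [hh, sub_sub_cancel_left]
        exact (hDmem _).mpr (Or.inl ⟨2 * ((j : ℕ) / 4) + 2, by omega, by omega, Or.inr rfl⟩)
    · by_cases h2m : (j : ℕ) < 2 * m
      · have hmodd : m % 2 = 1 := by omega
        obtain ⟨hi1, hi2, hi3, -, -⟩ := hFL hmodd
        rw [hσleft j (by omega) h2m]
        refine ⟨hi1 _, fun i => hi2 _ i, fun i => ?_⟩
        rcases hi3 ⟨(j : ℕ) % 2, Nat.mod_lt _ (by norm_num)⟩ i with hh | hh
        · rw [hh, add_sub_cancel_left]
          exact (hDmem _).mpr (Or.inl ⟨m, by omega, le_refl m, Or.inl rfl⟩)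
        · rw [hh, sub_sub_cancel_left]
          exact (hDmem _).mpr (Or.inl ⟨m, by omega, le_refl m, Or.inr rfl⟩)
      · have he1 : e = 1 := by omega
        obtain ⟨hi1, hi2, hi3⟩ := hFS he1
        rw [hσshift j (by omega)]
        refine ⟨hi1, hi2, fun i => ?_⟩
        rw [hi3 i, add_sub_cancel_left]
        exact (hDmem _).mpr (Or.inr ⟨he1, rfl⟩)
  have hex : ∀ i : ZMod t, ∀ d ∈ D, ∃ j : Fin D.card, σ j i = i + d := by
    intro i d hd
    rcases (hDmem d).mp hd with ⟨ν, h1, h2, hpm⟩ | ⟨he1, rfl⟩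
    · by_cases hq : ν % 2 = 0
      · have hr : ν / 2 - 1 < P := by omega
        obtain ⟨-, -, -, -, -, hex1, hex2⟩ := hFP (ν / 2 - 1) hr
        have hbv : 2 * (ν / 2 - 1) + 2 = ν := by omega
        rcases hpm with rfl | rfl
        · obtain ⟨k, hk⟩ := hex1 i
          have hk4 : (k : ℕ) < 4 := k.isLt
          refine ⟨⟨4 * (ν / 2 - 1) + (k : ℕ), by omega⟩, ?_⟩
          rw [hσpair _ (by simp only; omega)]
          have e1 : (4 * (ν / 2 - 1) + (k : ℕ)) / 4 = ν / 2 - 1 := by omega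
          have e2 : (4 * (ν / 2 - 1) + (k : ℕ)) % 4 = (k : ℕ) := by omega
          simp only [e1, e2, Fin.eta]
          rw [hk, hbv]
        · obtain ⟨k, hk⟩ := hex2 i
          have hk4 : (k : ℕ) < 4 := k.isLt
          refine ⟨⟨4 * (ν / 2 - 1) + (k : ℕ), by omega⟩, ?_⟩
          rw [hσpair _ (by simp only; omega)]
          have e1 : (4 * (ν / 2 - 1) + (k : ℕ)) / 4 = ν / 2 - 1 := by omega
          have e2 : (4 * (ν / 2 - 1) + (k : ℕ)) % 4 = (k : ℕ) := by omega
          simp only [e1, e2, Fin.eta]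
          rw [← sub_eq_add_neg, hk, hbv]
      · by_cases hlast : ν + 1 ≤ m
        · have hr : ν / 2 < P := by omega
          obtain ⟨-, -, -, hex1, hex2, -, -⟩ := hFP (ν / 2) hr
          have hbv : 2 * (ν / 2) + 2 - 1 = ν := by omega
          rcases hpm with rfl | rfl
          · obtain ⟨k, hk⟩ := hex1 i
            have hk4 : (k : ℕ) < 4 := k.isLt
            refine ⟨⟨4 * (ν / 2) + (k : ℕ), by omega⟩, ?_⟩
            rw [hσpair _ (by simp only; omega)]
            have e1 : (4 * (ν / 2) + (k : ℕ)) / 4 = ν / 2 := by omega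
            have e2 : (4 * (ν / 2) + (k : ℕ)) % 4 = (k : ℕ) := by omega
            simp only [e1, e2, Fin.eta]
            rw [hk, hbv]
          · obtain ⟨k, hk⟩ := hex2 i
            have hk4 : (k : ℕ) < 4 := k.isLt
            refine ⟨⟨4 * (ν / 2) + (k : ℕ), by omega⟩, ?_⟩
            rw [hσpair _ (by simp only; omega)]
            have e1 : (4 * (ν / 2) + (k : ℕ)) / 4 = ν / 2 := by omega
            have e2 : (4 * (ν / 2) + (k : ℕ)) % 4 = (k : ℕ) := by omega
            simp only [e1, e2, Fin.eta]
            rw [← sub_eq_add_neg, hk, hbv]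
        · have hνm : ν = m := by omega
          have hmodd : m % 2 = 1 := by omega
          obtain ⟨-, -, -, hex1, hex2⟩ := hFL hmodd
          rcases hpm with rfl | rfl
          · obtain ⟨k, hk⟩ := hex1 i
            have hk2 : (k : ℕ) < 2 := k.isLt
            refine ⟨⟨4 * P + (k : ℕ), by omega⟩, ?_⟩
            rw [hσleft _ (by simp only; omega) (by simp only; omega)]
            have e2 : (4 * P + (k : ℕ)) % 2 = (k : ℕ) := by omega
            simp only [e2, Fin.eta]
            rw [hk, hνm]
          · obtain ⟨k, hk⟩ := hex2 i
            have hk2 : (k : ℕ) < 2 := k.isLt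
            refine ⟨⟨4 * P + (k : ℕ), by omega⟩, ?_⟩
            rw [hσleft _ (by simp only; omega) (by simp only; omega)]
            have e2 : (4 * P + (k : ℕ)) % 2 = (k : ℕ) := by omega
            simp only [e2, Fin.eta]
            rw [← sub_eq_add_neg, hk, hνm]
    · obtain ⟨-, -, hi3⟩ := hFS he1
      refine ⟨⟨2 * m, by omega⟩, ?_⟩
      rw [hσshift _ (by simp only; omega)]
      exact hi3 i
  refine ⟨σ, fun j => (key j).1, fun j i => (key j).2.1 i, fun j i => (key j).2.2 i, ?_⟩
  intro i d hd
  obtain ⟨j0, hj0⟩ := hex i d hd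
  have hinj : Function.Injective
      (fun j : Fin D.card => (⟨σ j i - i, (key j).2.2 i⟩ : {x // x ∈ D})) := by
    have hsurj : Function.Surjective
        (fun j : Fin D.card => (⟨σ j i - i, (key j).2.2 i⟩ : {x // x ∈ D})) := by
      rintro ⟨d', hd'⟩
      obtain ⟨j, hj⟩ := hex i d' hd'
      exact ⟨j, Subtype.ext (by simp only; rw [hj, add_sub_cancel_left])⟩
    exact ((Fintype.bijective_iff_surjective_and_card _).mpr
      ⟨hsurj, by simp [Fintype.card_coe]⟩).1
  refine ⟨j0, hj0, fun y hy => hinj ?_⟩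
  exact Subtype.ext (by simp only; rw [hy, hj0])
end

section
/- Let a, s, t be integers with t even, 2 ≤ s < t, 0 ≤ a ≤ min{⌊s/3⌋, t − s}, and a ≡ s (mod 2). Let S = {±(s+1)/2, ±(s+3)/2, …, ±(t/2 − 1)} ∪ {t/2} (as residues modulo t) if s is odd, and S = {±(s/2), ±(s/2 + 1), …, ±(t/2 − 1)} if s is even. Then Circ(t; S) admits an S-orthogonal (P_1^⟨a⟩, C_2^⟨(t−s−a)/2⟩)-subdigraph. -/
/-- An S-orthogonal (P₁^⟨a⟩, C₂^⟨c⟩)-subdigraph of Circ(t; S): a vertex-disjoint union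
of `a` single-arc directed paths (given by their endpoint pairs `e i`) and `c` directed
2-cycles (given by their vertex pairs `c j`, contributing both arcs), with all vertices
distinct, every arc having its difference in S, and each difference in S realized by
exactly one arc. -/
def OrthogonalPathsAnd2Cycles (t : ℕ) (S : Finset (ZMod t)) (a c : ℕ) : Prop :=
  ∃ (e : Fin a → ZMod t × ZMod t) (w : Fin c → ZMod t × ZMod t),
    ((List.ofFn fun i => [(e i).1, (e i).2]).flatten ++
      (List.ofFn fun j => [(w j).1, (w j).2]).flatten).Nodup ∧
    (∀ x ∈ (List.ofFn fun i => [e i]).flatten ++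
        (List.ofFn fun j => [w j, ((w j).2, (w j).1)]).flatten,
      x.2 - x.1 ∈ S) ∧
    (∀ d ∈ S,
      (((List.ofFn fun i => [e i]).flatten ++
          (List.ofFn fun j => [w j, ((w j).2, (w j).1)]).flatten).filter
        fun x => x.2 - x.1 = d).length = 1)


namespace Stmt19Aux
open List


/-- zigzag: 0, m, 1, m-1, 2, ... on [0,m] -/
def zig (m i : ℕ) : ℕ := if i % 2 = 0 then i / 2 else m - (i - 1) / 2

lemma zig_le {m i : ℕ} (h : i ≤ m) : zig m i ≤ m := by
  unfold zig; split <;> omega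

lemma zig_inj {m i j : ℕ} (hi : i ≤ m) (hj : j ≤ m) (h : zig m i = zig m j) : i = j := by
  unfold zig at h; split at h <;> split at h <;> omega

lemma zig_step_even {m k : ℕ} (hk : k < m) (he : k % 2 = 0) :
    zig m (k+1) = zig m k + (m - k) := by
  simp only [zig]
  rw [if_pos he, if_neg (by omega : ¬ (k+1) % 2 = 0)]
  omega

lemma zig_step_odd {m k : ℕ} (hk : k < m) (he : k % 2 = 1) :
    zig m k = zig m (k+1) + (m - k) := by
  simp only [zig]
  rw [if_neg (by omega : ¬ k % 2 = 0), if_pos (by omega : (k+1) % 2 = 0)]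
  omega

/-- unzip perm -/
lemma unzip_perm {α : Type*} (L : List (α × α)) :
    List.Perm (L.flatMap fun x => [x.1, x.2]) (L.map Prod.fst ++ L.map Prod.snd) := by
  induction L with
  | nil => simp
  | cons x L ih =>
    simp only [List.flatMap_cons, List.map_cons]
    refine List.Perm.trans ?_ (List.perm_middle.symm.cons x.1)
    simpa using (ih.cons x.2).cons x.1

/-- swapping pairs doesn't change flattened vertex multiset -/
lemma swap_perm {α : Type*} (L : List (α × α)) :
    List.Perm ((L.map Prod.swap).flatMap fun x => [x.1, x.2]) (L.flatMap fun x => [x.1, x.2]) := by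
  induction L with
  | nil => simp
  | cons x L ih =>
    simp only [List.map_cons, List.flatMap_cons, Prod.fst_swap, Prod.snd_swap]
    calc x.2 :: x.1 :: ((L.map Prod.swap).flatMap fun x => [x.1, x.2])
        ~ x.1 :: x.2 :: ((L.map Prod.swap).flatMap fun x => [x.1, x.2]) := List.Perm.swap _ _ _
      _ ~ x.1 :: x.2 :: (L.flatMap fun x => [x.1, x.2]) := (ih.cons _).cons _

lemma nodup_flatMap2 {α : Type*} (f g : ℕ → α) (N : ℕ)
    (h : ∀ i < N, ∀ j < N, (f i = f j → i = j) ∧ (g i = g j → i = j) ∧ f i ≠ g j) :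
    ((List.range N).flatMap fun k => [f k, g k]).Nodup := by
  induction N with
  | zero => simp
  | succ N ih =>
    rw [List.range_succ, List.flatMap_append]
    rw [List.nodup_append']
    refine ⟨ih (fun i hi j hj => h i (by omega) j (by omega)), ?_, ?_⟩
    · simp only [List.flatMap_cons, List.flatMap_nil]
      have := (h N (by omega) N (by omega)).2.2
      simp [this]
    · intro v hv hv2
      simp only [List.mem_flatMap, List.mem_range] at hv
      obtain ⟨k, hk, hvk⟩ := hv
      simp only [List.flatMap_cons, List.flatMap_nil, List.mem_cons, List.not_mem_nil,
        List.mem_append, or_false] at hvk hv2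
      obtain ⟨h1, h2, h3⟩ := h k (by omega) N (by omega)
      obtain ⟨h1', h2', h3'⟩ := h N (by omega) k (by omega)
      rcases hvk with rfl | rfl <;> rcases hv2 with e | e
      · exact absurd (h1 e) (by omega)
      · exact h3 e
      · exact h3' e.symm
      · exact absurd (h2 e) (by omega)

lemma ofFn_get_map {α β : Type*} (l : List α) (g : α → β) {k : ℕ} (h : l.length = k) :
    (List.ofFn fun i : Fin k => g (l.get (Fin.cast h.symm i))) = l.map g := by
  subst h
  apply List.ext_getElem
  · simp
  · intro i h1 h2
    simp

lemma nodup_cast_of_lt {t : ℕ} (l : List ℕ) (hl : l.Nodup) (hb : ∀ v ∈ l, v < t) :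
    (l.map (Nat.cast : ℕ → ZMod t)).Nodup := by
  refine hl.map_on ?_
  intro x hx y hy hxy
  have hx' := hb x hx; have hy' := hb y hy
  have : NeZero t := ⟨by omega⟩
  have := congrArg ZMod.val hxy
  rwa [ZMod.val_cast_of_lt hx', ZMod.val_cast_of_lt hy'] at this

lemma cast_diff1 {t n b c : ℕ} (hb : b ≤ n + c) :
    ((n + c : ℕ) : ZMod t) - (b : ZMod t) = ((n + c - b : ℕ) : ZMod t) := by
  rw [Nat.cast_sub hb]

lemma cast_diff2 {t n b c : ℕ} (ht : t = 2 * n) (hc : c ≤ n + b) :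
    (b : ZMod t) - ((n + c : ℕ) : ZMod t) = ((n + b - c : ℕ) : ZMod t) := by
  have key : ((n + b - c : ℕ) : ZMod t) + ((n + c : ℕ) : ZMod t) = (b : ZMod t) := by
    rw [← Nat.cast_add]
    have : (n + b - c) + (n + c) = t + b := by omega
    rw [this, Nat.cast_add, ZMod.natCast_self, zero_add]
  exact (eq_sub_of_add_eq key).symm




/-- 2-cycle edges: zigzag path on [0,m], first m-q edges -/
def Wn (n m q : ℕ) : List (ℕ × ℕ) :=
  (List.range (m - q)).map fun k => (zig m k, n + zig m (k+1))

/-- main-path arc edges: last q edges of the zigzag path -/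
def Mn (n m q : ℕ) : List (ℕ × ℕ) :=
  (List.range q).map fun i => (zig m (m - q + i), n + zig m (m - q + i + 1))

/-- extra arc edges: zigzag path on [m+1+z, m+q+1+z] -/
def Xc (n m q z : ℕ) : List (ℕ × ℕ) :=
  (List.range q).map fun l => (m + 1 + z + zig q l, n + (m + 1 + z + zig q (l+1)))

def Xn (n m q z : ℕ) : List (ℕ × ℕ) :=
  if (m + q) % 2 = 0 then (Xc n m q z).map Prod.swap else Xc n m q z

/-- the t/2 arc -/
def Zn (n m z : ℕ) : List (ℕ × ℕ) := if z = 1 then [(m + 1, n + (m + 1))] else []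

def En (n m q z : ℕ) : List (ℕ × ℕ) := Mn n m q ++ Xn n m q z ++ Zn n m z

/-- canonical difference list (as naturals) -/
def Dn (n m q z : ℕ) : List ℕ :=
  ((List.range q).map fun i => if (m - q + i) % 2 = 0 then n + (q - i) else n - (q - i)) ++
  ((List.range q).map fun l => if (m - q + l) % 2 = 0 then n - (q - l) else n + (q - l)) ++
  (if z = 1 then [n] else []) ++
  ((List.range (m - q)).flatMap fun k =>
    [if k % 2 = 0 then n + (m - k) else n - (m - k),
     if k % 2 = 0 then n - (m - k) else n + (m - k)])

lemma En_length (n m q z : ℕ) (hz : z ≤ 1) : (En n m q z).length = 2 * q + z := by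
  unfold En Mn Xn Xc Zn
  split <;> split <;> simp_all <;> omega

lemma Wn_length (n m q : ℕ) : (Wn n m q).length = m - q := by simp [Wn]


end Stmt19Aux

namespace Stmt19Aux2
open List Stmt19Aux

variable {n m q z : ℕ}

/-- segment A: main-path arc differences -/
def segA (n m q : ℕ) : List ℕ :=
  (List.range q).map fun i => if (m - q + i) % 2 = 0 then n + (q - i) else n - (q - i)

/-- segment B: extra-path arc differences -/
def segB (n m q : ℕ) : List ℕ :=
  (List.range q).map fun l => if (m - q + l) % 2 = 0 then n - (q - l) else n + (q - l)

def segC (n z : ℕ) : List ℕ := if z = 1 then [n] else []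

def segD (n m q : ℕ) : List ℕ :=
  (List.range (m - q)).flatMap fun k =>
    [if k % 2 = 0 then n + (m - k) else n - (m - k),
     if k % 2 = 0 then n - (m - k) else n + (m - k)]

lemma Dn_eq : Dn n m q z = segA n m q ++ segB n m q ++ segC n z ++ segD n m q := rfl

lemma cA (hqm : q ≤ m) {v : ℕ} (hv : v ∈ segA n m q) :
    ∃ j, 1 ≤ j ∧ j ≤ q ∧ (((m - j) % 2 = 0 ∧ v = n + j) ∨ ((m - j) % 2 = 1 ∧ v = n - j)) := by
  simp only [segA, List.mem_map, List.mem_range] at hv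
  obtain ⟨i, hi, rfl⟩ := hv
  by_cases h : (m - q + i) % 2 = 0
  · exact ⟨q - i, by omega, by omega, Or.inl ⟨by omega, by rw [if_pos h]⟩⟩
  · exact ⟨q - i, by omega, by omega, Or.inr ⟨by omega, by rw [if_neg h]⟩⟩

lemma cB (hqm : q ≤ m) {v : ℕ} (hv : v ∈ segB n m q) :
    ∃ j, 1 ≤ j ∧ j ≤ q ∧ (((m - j) % 2 = 0 ∧ v = n - j) ∨ ((m - j) % 2 = 1 ∧ v = n + j)) := by
  simp only [segB, List.mem_map, List.mem_range] at hv
  obtain ⟨i, hi, rfl⟩ := hv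
  by_cases h : (m - q + i) % 2 = 0
  · exact ⟨q - i, by omega, by omega, Or.inl ⟨by omega, by rw [if_pos h]⟩⟩
  · exact ⟨q - i, by omega, by omega, Or.inr ⟨by omega, by rw [if_neg h]⟩⟩

lemma cC {v : ℕ} (hv : v ∈ segC n z) : v = n ∧ z = 1 := by
  simp only [segC] at hv
  split at hv <;> simp_all

lemma cD {v : ℕ} (hv : v ∈ segD n m q) :
    ∃ j, q + 1 ≤ j ∧ j ≤ m ∧ (v = n + j ∨ v = n - j) := by
  simp only [segD, List.mem_flatMap, List.mem_range, List.mem_cons, List.not_mem_nil,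
    or_false] at hv
  obtain ⟨k, hk, hvk⟩ := hv
  rcases hvk with rfl | rfl <;> refine ⟨m - k, by omega, by omega, ?_⟩ <;>
    split_ifs <;> tauto

lemma Dn_nodup (hmn : m + z < n) (hqm : q ≤ m) : (Dn n m q z).Nodup := by
  have hA : (segA n m q).Nodup := by
    refine (List.nodup_range (n := q)).map_on ?_
    intro x hx y hy h
    simp only [List.mem_range] at hx hy
    split_ifs at h <;> omega
  have hB : (segB n m q).Nodup := by
    refine (List.nodup_range (n := q)).map_on ?_
    intro x hx y hy h
    simp only [List.mem_range] at hx hy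
    split_ifs at h <;> omega
  have hD : (segD n m q).Nodup := by
    refine nodup_flatMap2 _ _ _ ?_
    intro i hi j hj
    refine ⟨fun h => ?_, fun h => ?_, fun h => ?_⟩ <;> split_ifs at h <;> omega
  have hC : (segC n z).Nodup := by unfold segC; split <;> simp
  have dAB : (segA n m q).Disjoint (segB n m q) := by
    intro v h1 h2
    obtain ⟨j, hj1, hj2, hj3⟩ := cA hqm h1
    obtain ⟨j', hj1', hj2', hj3'⟩ := cB hqm h2
    rcases hj3 with ⟨e1, rfl⟩ | ⟨e1, rfl⟩ <;> rcases hj3' with ⟨e2, h⟩ | ⟨e2, h⟩ <;> omega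
  have dAC : (segA n m q).Disjoint (segC n z) := by
    intro v h1 h2
    obtain ⟨j, hj1, hj2, hj3⟩ := cA hqm h1
    obtain ⟨rfl, _⟩ := cC h2
    rcases hj3 with ⟨_, h⟩ | ⟨_, h⟩ <;> omega
  have dBC : (segB n m q).Disjoint (segC n z) := by
    intro v h1 h2
    obtain ⟨j, hj1, hj2, hj3⟩ := cB hqm h1
    obtain ⟨rfl, _⟩ := cC h2
    rcases hj3 with ⟨_, h⟩ | ⟨_, h⟩ <;> omega
  have dAD : (segA n m q).Disjoint (segD n m q) := by
    intro v h1 h2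
    obtain ⟨j, hj1, hj2, hj3⟩ := cA hqm h1
    obtain ⟨j', hj1', hj2', hj3'⟩ := cD h2
    rcases hj3 with ⟨_, rfl⟩ | ⟨_, rfl⟩ <;> rcases hj3' with h | h <;> omega
  have dBD : (segB n m q).Disjoint (segD n m q) := by
    intro v h1 h2
    obtain ⟨j, hj1, hj2, hj3⟩ := cB hqm h1
    obtain ⟨j', hj1', hj2', hj3'⟩ := cD h2
    rcases hj3 with ⟨_, rfl⟩ | ⟨_, rfl⟩ <;> rcases hj3' with h | h <;> omega
  have dCD : (segC n z).Disjoint (segD n m q) := by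
    intro v h1 h2
    obtain ⟨rfl, _⟩ := cC h1
    obtain ⟨j', hj1', hj2', hj3'⟩ := cD h2
    rcases hj3' with h | h <;> omega
  rw [Dn_eq]
  simp only [List.nodup_append', List.disjoint_append_left, List.disjoint_append_right]
  exact ⟨⟨⟨hA, hB, dAB⟩, hC, dAC, dBC⟩, hD, ⟨dAD, dBD⟩, dCD⟩

lemma Dn_bounds (hmn : m + z < n) (hqm : q ≤ m) :
    ∀ v ∈ Dn n m q z, n - m ≤ v ∧ v ≤ n + m ∧ (v = n → z = 1) := by
  intro v hv
  rw [Dn_eq] at hv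
  simp only [List.mem_append] at hv
  rcases hv with ((hv | hv) | hv) | hv
  · obtain ⟨j, h1, h2, h3⟩ := cA hqm hv
    rcases h3 with ⟨_, rfl⟩ | ⟨_, rfl⟩ <;> omega
  · obtain ⟨j, h1, h2, h3⟩ := cB hqm hv
    rcases h3 with ⟨_, rfl⟩ | ⟨_, rfl⟩ <;> omega
  · obtain ⟨rfl, hz⟩ := cC hv
    omega
  · obtain ⟨j, h1, h2, h3⟩ := cD hv
    rcases h3 with rfl | rfl <;> omega

lemma Dn_cover (hmn : m + z < n) (hqm : q ≤ m) :
    ∀ r, n - m ≤ r → r ≤ n + m → (r = n → z = 1) → r ∈ Dn n m q z := by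
  intro r h1 h2 h3
  rw [Dn_eq]
  simp only [List.mem_append]
  by_cases hr : r = n
  · have hz1 : z = 1 := h3 hr
    refine Or.inl (Or.inr ?_)
    simp [segC, hz1, hr]
  · have memD : ∀ j, q + 1 ≤ j → j ≤ m → (r = n + j ∨ r = n - j) → r ∈ segD n m q := by
      intro j hj1 hj2 hj3
      simp only [segD, List.mem_flatMap, List.mem_range, List.mem_cons, List.not_mem_nil,
        or_false]
      refine ⟨m - j, by omega, ?_⟩
      have e : m - (m - j) = j := by omega
      rw [e]
      rcases hj3 with rfl | rfl <;> split_ifs <;> omega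
    have memA : ∀ j, 1 ≤ j → j ≤ q →
        (((m - j) % 2 = 0 ∧ r = n + j) ∨ ((m - j) % 2 = 1 ∧ r = n - j)) → r ∈ segA n m q := by
      intro j hj1 hj2 hj3
      simp only [segA, List.mem_map, List.mem_range]
      refine ⟨q - j, by omega, ?_⟩
      have e : m - q + (q - j) = m - j := by omega
      rw [e]
      have e2 : q - (q - j) = j := by omega
      rw [e2]
      rcases hj3 with ⟨hp, rfl⟩ | ⟨hp, rfl⟩
      · rw [if_pos hp]
      · rw [if_neg (by omega)]
    have memB : ∀ j, 1 ≤ j → j ≤ q →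
        (((m - j) % 2 = 0 ∧ r = n - j) ∨ ((m - j) % 2 = 1 ∧ r = n + j)) → r ∈ segB n m q := by
      intro j hj1 hj2 hj3
      simp only [segB, List.mem_map, List.mem_range]
      refine ⟨q - j, by omega, ?_⟩
      have e : m - q + (q - j) = m - j := by omega
      rw [e]
      have e2 : q - (q - j) = j := by omega
      rw [e2]
      rcases hj3 with ⟨hp, rfl⟩ | ⟨hp, rfl⟩
      · rw [if_pos hp]
      · rw [if_neg (by omega)]
    rcases Nat.lt_or_ge r n with hlt | hge
    · set j := n - r with hj
      have hj1 : 1 ≤ j := by omega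
      have hj2 : j ≤ m := by omega
      by_cases hjq : j ≤ q
      · by_cases hpar : (m - j) % 2 = 0
        · exact Or.inl (Or.inl (Or.inr (memB j hj1 hjq (Or.inl ⟨hpar, by omega⟩))))
        · exact Or.inl (Or.inl (Or.inl (memA j hj1 hjq (Or.inr ⟨by omega, by omega⟩))))
      · exact Or.inr (memD j (by omega) hj2 (Or.inr (by omega)))
    · set j := r - n with hj
      have hj1 : 1 ≤ j := by omega
      have hj2 : j ≤ m := by omega
      by_cases hjq : j ≤ q
      · by_cases hpar : (m - j) % 2 = 0
        · exact Or.inl (Or.inl (Or.inl (memA j hj1 hjq (Or.inl ⟨hpar, by omega⟩))))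
        · exact Or.inl (Or.inl (Or.inr (memB j hj1 hjq (Or.inr ⟨by omega, by omega⟩))))
      · exact Or.inr (memD j (by omega) hj2 (Or.inl (by omega)))

end Stmt19Aux2

namespace Stmt19Aux3
open List Stmt19Aux

variable {n m q z : ℕ}

lemma memM1 : ∀ v ∈ (Mn n m q).map Prod.fst, ∃ i < q, v = zig m (m - q + i) := by
  intro v hv
  simp only [Mn, List.map_map, Function.comp_def, List.mem_map, List.mem_range] at hv
  obtain ⟨i, hi, rfl⟩ := hv; exact ⟨i, hi, rfl⟩

lemma memX1 : ∀ v ∈ (Xc n m q z).map Prod.fst, ∃ l < q, v = m + 1 + z + zig q l := by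
  intro v hv
  simp only [Xc, List.map_map, Function.comp_def, List.mem_map, List.mem_range] at hv
  obtain ⟨l, hl, rfl⟩ := hv; exact ⟨l, hl, rfl⟩

lemma memZ1 : ∀ v ∈ (Zn n m z).map Prod.fst, v = m + 1 ∧ z = 1 := by
  intro v hv; unfold Zn at hv
  split at hv
  · next h =>
    simp only [List.map_cons, List.map_nil, List.mem_singleton] at hv
    exact ⟨hv, h⟩
  · simp at hv

lemma memW1 : ∀ v ∈ (Wn n m q).map Prod.fst, ∃ k < m - q, v = zig m k := by
  intro v hv
  simp only [Wn, List.map_map, Function.comp_def, List.mem_map, List.mem_range] at hv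
  obtain ⟨k, hk, rfl⟩ := hv; exact ⟨k, hk, rfl⟩

lemma memM2 : ∀ v ∈ (Mn n m q).map Prod.snd, ∃ i < q, v = n + zig m (m - q + i + 1) := by
  intro v hv
  simp only [Mn, List.map_map, Function.comp_def, List.mem_map, List.mem_range] at hv
  obtain ⟨i, hi, rfl⟩ := hv; exact ⟨i, hi, rfl⟩

lemma memX2 : ∀ v ∈ (Xc n m q z).map Prod.snd, ∃ l < q, v = n + (m + 1 + z + zig q (l+1)) := by
  intro v hv
  simp only [Xc, List.map_map, Function.comp_def, List.mem_map, List.mem_range] at hv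
  obtain ⟨l, hl, rfl⟩ := hv; exact ⟨l, hl, rfl⟩

lemma memZ2 : ∀ v ∈ (Zn n m z).map Prod.snd, v = n + (m + 1) ∧ z = 1 := by
  intro v hv; unfold Zn at hv
  split at hv
  · next h =>
    simp only [List.map_cons, List.map_nil, List.mem_singleton] at hv
    exact ⟨hv, h⟩
  · simp at hv

lemma memW2 : ∀ v ∈ (Wn n m q).map Prod.snd, ∃ k < m - q, v = n + zig m (k+1) := by
  intro v hv
  simp only [Wn, List.map_map, Function.comp_def, List.mem_map, List.mem_range] at hv
  obtain ⟨k, hk, rfl⟩ := hv; exact ⟨k, hk, rfl⟩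

lemma V_bot (hq1 : 1 ≤ q → m + q + 1 + z < n) (hmn : m + z < n) (hqm : q ≤ m) :
    ∀ v ∈ (Mn n m q ++ Xc n m q z ++ Zn n m z ++ Wn n m q).map Prod.fst, v < n := by
  intro v hv
  simp only [List.map_append, List.mem_append] at hv
  rcases hv with ((hv | hv) | hv) | hv
  · obtain ⟨i, hi, rfl⟩ := memM1 _ hv
    have := zig_le (show m - q + i ≤ m by omega); omega
  · obtain ⟨l, hl, rfl⟩ := memX1 _ hv
    have := zig_le (show l ≤ q by omega)
    have := hq1 (by omega); omega
  · obtain ⟨rfl, hz1⟩ := memZ1 _ hv; omega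
  · obtain ⟨k, hk, rfl⟩ := memW1 _ hv
    have := zig_le (show k ≤ m by omega); omega

lemma V_top (hq1 : 1 ≤ q → m + q + 1 + z < n) (hmn : m + z < n) (hqm : q ≤ m) :
    ∀ v ∈ (Mn n m q ++ Xc n m q z ++ Zn n m z ++ Wn n m q).map Prod.snd,
      n ≤ v ∧ v < 2 * n := by
  intro v hv
  simp only [List.map_append, List.mem_append] at hv
  rcases hv with ((hv | hv) | hv) | hv
  · obtain ⟨i, hi, rfl⟩ := memM2 _ hv
    have := zig_le (show m - q + i + 1 ≤ m by omega); omega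
  · obtain ⟨l, hl, rfl⟩ := memX2 _ hv
    have := zig_le (show l + 1 ≤ q by omega)
    have := hq1 (by omega); omega
  · obtain ⟨rfl, hz1⟩ := memZ2 _ hv; omega
  · obtain ⟨k, hk, rfl⟩ := memW2 _ hv
    have := zig_le (show k + 1 ≤ m by omega); omega

lemma V_core_nodup (hz : z ≤ 1) (hmn : m + z < n) (hq1 : 1 ≤ q → m + q + 1 + z < n)
    (hqm : q ≤ m) :
    ((Mn n m q ++ Xc n m q z ++ Zn n m z ++ Wn n m q).map Prod.fst ++
     (Mn n m q ++ Xc n m q z ++ Zn n m z ++ Wn n m q).map Prod.snd).Nodup := by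
  rw [List.nodup_append']
  refine ⟨?_, ?_, fun v hv hv' => by
    have := V_bot hq1 hmn hqm v hv
    have := (V_top hq1 hmn hqm v hv').1
    omega⟩
  · -- bottoms nodup
    simp only [List.map_append]
    have nM : ((Mn n m q).map Prod.fst).Nodup := by
      simp only [Mn, List.map_map, Function.comp_def]
      refine (List.nodup_range (n := q)).map_on ?_
      intro x hx y hy h
      simp only [List.mem_range] at hx hy
      have := zig_inj (show m - q + x ≤ m by omega) (show m - q + y ≤ m by omega) h
      omega
    have nX : ((Xc n m q z).map Prod.fst).Nodup := by
      simp only [Xc, List.map_map, Function.comp_def]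
      refine (List.nodup_range (n := q)).map_on ?_
      intro x hx y hy h
      simp only [List.mem_range] at hx hy
      have := zig_inj (show x ≤ q by omega) (show y ≤ q by omega)
        (show zig q x = zig q y by omega)
      omega
    have nZ : ((Zn n m z).map Prod.fst).Nodup := by unfold Zn; split <;> simp
    have nW : ((Wn n m q).map Prod.fst).Nodup := by
      simp only [Wn, List.map_map, Function.comp_def]
      refine (List.nodup_range (n := m - q)).map_on ?_
      intro x hx y hy h
      simp only [List.mem_range] at hx hy
      exact zig_inj (by omega) (by omega) h
    simp only [List.nodup_append', List.disjoint_append_left, List.disjoint_append_right]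
    refine ⟨⟨⟨nM, nX, ?_⟩, nZ, ?_, ?_⟩, nW, ⟨?_, ?_⟩, ?_⟩
    · intro v h1 h2
      obtain ⟨i, hi, rfl⟩ := memM1 _ h1
      obtain ⟨l, hl, h⟩ := memX1 _ h2
      have := zig_le (show m - q + i ≤ m by omega); omega
    · intro v h1 h2
      obtain ⟨i, hi, rfl⟩ := memM1 _ h1
      obtain ⟨h, hz1⟩ := memZ1 _ h2
      have := zig_le (show m - q + i ≤ m by omega); omega
    · intro v h1 h2
      obtain ⟨l, hl, rfl⟩ := memX1 _ h1
      obtain ⟨h, hz1⟩ := memZ1 _ h2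
      have := zig_le (show l ≤ q by omega); omega
    · intro v h1 h2
      obtain ⟨i, hi, rfl⟩ := memM1 _ h1
      obtain ⟨k, hk, h⟩ := memW1 _ h2
      have := zig_inj (show m - q + i ≤ m by omega) (show k ≤ m by omega) h
      omega
    · intro v h1 h2
      obtain ⟨l, hl, rfl⟩ := memX1 _ h1
      obtain ⟨k, hk, h⟩ := memW1 _ h2
      have := zig_le (show k ≤ m by omega); omega
    · intro v h1 h2
      obtain ⟨h, hz1⟩ := memZ1 _ h1
      obtain ⟨k, hk, h2'⟩ := memW1 _ h2
      have := zig_le (show k ≤ m by omega); omega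
  · -- tops nodup
    simp only [List.map_append]
    have nM : ((Mn n m q).map Prod.snd).Nodup := by
      simp only [Mn, List.map_map, Function.comp_def]
      refine (List.nodup_range (n := q)).map_on ?_
      intro x hx y hy h
      simp only [List.mem_range] at hx hy
      have := zig_inj (show m - q + x + 1 ≤ m by omega) (show m - q + y + 1 ≤ m by omega)
        (show zig m (m - q + x + 1) = zig m (m - q + y + 1) by omega)
      omega
    have nX : ((Xc n m q z).map Prod.snd).Nodup := by
      simp only [Xc, List.map_map, Function.comp_def]
      refine (List.nodup_range (n := q)).map_on ?_
      intro x hx y hy h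
      simp only [List.mem_range] at hx hy
      have := zig_inj (show x + 1 ≤ q by omega) (show y + 1 ≤ q by omega)
        (show zig q (x+1) = zig q (y+1) by omega)
      omega
    have nZ : ((Zn n m z).map Prod.snd).Nodup := by unfold Zn; split <;> simp
    have nW : ((Wn n m q).map Prod.snd).Nodup := by
      simp only [Wn, List.map_map, Function.comp_def]
      refine (List.nodup_range (n := m - q)).map_on ?_
      intro x hx y hy h
      simp only [List.mem_range] at hx hy
      have := zig_inj (show x + 1 ≤ m by omega) (show y + 1 ≤ m by omega)
        (show zig m (x+1) = zig m (y+1) by omega)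
      omega
    simp only [List.nodup_append', List.disjoint_append_left, List.disjoint_append_right]
    refine ⟨⟨⟨nM, nX, ?_⟩, nZ, ?_, ?_⟩, nW, ⟨?_, ?_⟩, ?_⟩
    · intro v h1 h2
      obtain ⟨i, hi, rfl⟩ := memM2 _ h1
      obtain ⟨l, hl, h⟩ := memX2 _ h2
      have := zig_le (show m - q + i + 1 ≤ m by omega); omega
    · intro v h1 h2
      obtain ⟨i, hi, rfl⟩ := memM2 _ h1
      obtain ⟨h, hz1⟩ := memZ2 _ h2
      have := zig_le (show m - q + i + 1 ≤ m by omega); omega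
    · intro v h1 h2
      obtain ⟨l, hl, rfl⟩ := memX2 _ h1
      obtain ⟨h, hz1⟩ := memZ2 _ h2
      have := zig_le (show l + 1 ≤ q by omega); omega
    · intro v h1 h2
      obtain ⟨i, hi, rfl⟩ := memM2 _ h1
      obtain ⟨k, hk, h⟩ := memW2 _ h2
      have := zig_inj (show m - q + i + 1 ≤ m by omega) (show k + 1 ≤ m by omega)
        (show zig m (m - q + i + 1) = zig m (k + 1) by omega)
      omega
    · intro v h1 h2
      obtain ⟨l, hl, rfl⟩ := memX2 _ h1
      obtain ⟨k, hk, h⟩ := memW2 _ h2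
      have := zig_le (show k + 1 ≤ m by omega); omega
    · intro v h1 h2
      obtain ⟨h, hz1⟩ := memZ2 _ h1
      obtain ⟨k, hk, h2'⟩ := memW2 _ h2
      have := zig_le (show k + 1 ≤ m by omega); omega

lemma V_perm :
    List.Perm ((En n m q z ++ Wn n m q).flatMap fun x => [x.1, x.2])
      ((Mn n m q ++ Xc n m q z ++ Zn n m z ++ Wn n m q).flatMap fun x => [x.1, x.2]) := by
  unfold En
  simp only [List.flatMap_append]
  have hx : List.Perm ((Xn n m q z).flatMap fun x => [x.1, x.2])
      ((Xc n m q z).flatMap fun x => [x.1, x.2]) := by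
    unfold Xn
    split
    · exact swap_perm _
    · exact List.Perm.refl _
  exact (((hx.append_left _).append_right _).append_right _)

lemma V_nodup (hz : z ≤ 1) (hmn : m + z < n) (hq1 : 1 ≤ q → m + q + 1 + z < n) (hqm : q ≤ m) :
    ((En n m q z ++ Wn n m q).flatMap fun x => [x.1, x.2]).Nodup :=
  (V_perm.trans (unzip_perm _)).symm.nodup (V_core_nodup hz hmn hq1 hqm)

lemma V_lt (t : ℕ) (ht : t = 2 * n) (hz : z ≤ 1) (hmn : m + z < n)
    (hq1 : 1 ≤ q → m + q + 1 + z < n) (hqm : q ≤ m) :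
    ∀ v ∈ (En n m q z ++ Wn n m q).flatMap fun x => [x.1, x.2], v < t := by
  intro v hv
  rw [(V_perm.trans (unzip_perm _)).mem_iff, List.mem_append] at hv
  rcases hv with hv | hv
  · have := V_bot hq1 hmn hqm v hv; omega
  · have := (V_top hq1 hmn hqm v hv).2; omega

end Stmt19Aux3

namespace Stmt19Aux4
open List Stmt19Aux Stmt19Aux2

variable {n m q z : ℕ}

lemma flatMap_congr {α β : Type*} {l : List α} {f g : α → List β}
    (h : ∀ x ∈ l, f x = g x) : l.flatMap f = l.flatMap g := by
  rw [List.flatMap_def, List.flatMap_def, List.map_congr_left h]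

def c2 (t : ℕ) : ℕ × ℕ → ZMod t × ZMod t := fun x => ((x.1 : ZMod t), (x.2 : ZMod t))

lemma dW1_val {n m k : ℕ} (hk : k < m) (hmn : m < n) :
    n + zig m (k+1) - zig m k = if k % 2 = 0 then n + (m - k) else n - (m - k) := by
  have hb := zig_le (show k ≤ m by omega)
  have hb2 := zig_le (show k + 1 ≤ m by omega)
  by_cases hp : k % 2 = 0
  · have hs := zig_step_even hk hp
    rw [if_pos hp]; omega
  · have hs := zig_step_odd hk (by omega)
    rw [if_neg hp]; omega

lemma dW2_val {n m k : ℕ} (hk : k < m) (hmn : m < n) :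
    n + zig m k - zig m (k+1) = if k % 2 = 0 then n - (m - k) else n + (m - k) := by
  have hb := zig_le (show k ≤ m by omega)
  have hb2 := zig_le (show k + 1 ≤ m by omega)
  by_cases hp : k % 2 = 0
  · have hs := zig_step_even hk hp
    rw [if_pos hp]; omega
  · have hs := zig_step_odd hk (by omega)
    rw [if_neg hp]; omega

lemma dM_eq (t : ℕ) (hmn : m + z < n) (hqm : q ≤ m) :
    (((Mn n m q).map (c2 t)).map fun x => x.2 - x.1)
      = (segA n m q).map (Nat.cast : ℕ → ZMod t) := by
  unfold Mn segA
  simp only [List.map_map, Function.comp_def, c2]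
  apply List.map_congr_left
  intro i hi
  simp only [List.mem_range] at hi
  have hb := zig_le (show m - q + i ≤ m by omega)
  have hb2 := zig_le (show m - q + i + 1 ≤ m by omega)
  rw [cast_diff1 (show zig m (m - q + i) ≤ n + zig m (m - q + i + 1) by omega)]
  congr 1
  by_cases hp : (m - q + i) % 2 = 0
  · have hs := zig_step_even (show m - q + i < m by omega) hp
    rw [if_pos hp]; omega
  · have hs := zig_step_odd (show m - q + i < m by omega) (by omega)
    rw [if_neg hp]; omega

lemma dX_eq (t : ℕ) (ht : t = 2 * n) (hmn : m + z < n) (hq1 : 1 ≤ q → m + q + 1 + z < n)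
    (hqm : q ≤ m) :
    (((Xn n m q z).map (c2 t)).map fun x => x.2 - x.1)
      = (segB n m q).map (Nat.cast : ℕ → ZMod t) := by
  unfold Xn Xc segB
  split
  · next hflip =>
    simp only [List.map_map, Function.comp_def, c2, Prod.swap_prod_mk]
    apply List.map_congr_left
    intro l hl
    simp only [List.mem_range] at hl
    have hn := hq1 (by omega)
    have hb := zig_le (show l ≤ q by omega)
    have hb2 := zig_le (show l + 1 ≤ q by omega)
    rw [cast_diff2 ht (show m + 1 + z + zig q (l+1) ≤ n + (m + 1 + z + zig q l) by omega)]
    congr 1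
    by_cases hp : l % 2 = 0
    · have hs := zig_step_even (show l < q by omega) hp
      rw [if_pos (show (m - q + l) % 2 = 0 by omega)]; omega
    · have hs := zig_step_odd (show l < q by omega) (by omega)
      rw [if_neg (show ¬ (m - q + l) % 2 = 0 by omega)]; omega
  · next hflip =>
    simp only [List.map_map, Function.comp_def, c2]
    apply List.map_congr_left
    intro l hl
    simp only [List.mem_range] at hl
    have hn := hq1 (by omega)
    have hb := zig_le (show l ≤ q by omega)
    have hb2 := zig_le (show l + 1 ≤ q by omega)
    rw [cast_diff1 (show m + 1 + z + zig q l ≤ n + (m + 1 + z + zig q (l+1)) by omega)]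
    congr 1
    by_cases hp : l % 2 = 0
    · have hs := zig_step_even (show l < q by omega) hp
      rw [if_neg (show ¬ (m - q + l) % 2 = 0 by omega)]; omega
    · have hs := zig_step_odd (show l < q by omega) (by omega)
      rw [if_pos (show (m - q + l) % 2 = 0 by omega)]; omega

lemma dZ_eq (t : ℕ) (hmn : m + z < n) :
    (((Zn n m z).map (c2 t)).map fun x => x.2 - x.1)
      = (segC n z).map (Nat.cast : ℕ → ZMod t) := by
  unfold Zn segC
  split
  · simp only [List.map_cons, List.map_nil, c2]
    congr 1
    rw [cast_diff1 (show m + 1 ≤ n + (m + 1) by omega)]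
    congr 1
    omega
  · simp

lemma dW_eq (t : ℕ) (ht : t = 2 * n) (hmn : m + z < n) (hqm : q ≤ m) :
    ((((Wn n m q).map (c2 t)).flatMap fun x => [x, (x.2, x.1)]).map fun x => x.2 - x.1)
      = (segD n m q).map (Nat.cast : ℕ → ZMod t) := by
  unfold Wn segD
  rw [List.map_map, List.flatMap_map, List.map_flatMap, List.map_flatMap]
  apply flatMap_congr
  intro k hk
  simp only [List.mem_range] at hk
  simp only [Function.comp_def, c2, List.map_cons, List.map_nil]
  have hb := zig_le (show k ≤ m by omega)
  have hb2 := zig_le (show k + 1 ≤ m by omega)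
  rw [cast_diff1 (show zig m k ≤ n + zig m (k+1) by omega),
    cast_diff2 ht (show zig m (k+1) ≤ n + zig m k by omega),
    dW1_val (show k < m by omega) (show m < n by omega),
    dW2_val (show k < m by omega) (show m < n by omega)]

lemma arcs_diff (t : ℕ) (ht : t = 2 * n) (hz : z ≤ 1) (hmn : m + z < n)
    (hq1 : 1 ≤ q → m + q + 1 + z < n) (hqm : q ≤ m) :
    (((En n m q z).map (c2 t) ++ ((Wn n m q).map (c2 t)).flatMap fun x => [x, (x.2, x.1)]).map
      fun x => x.2 - x.1) = (Dn n m q z).map (Nat.cast : ℕ → ZMod t) := by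
  rw [Dn_eq]
  unfold En
  simp only [List.map_append, List.map_append]
  rw [dM_eq t hmn hqm, dX_eq t ht hmn hq1 hqm, dZ_eq t hmn, dW_eq t ht hmn hqm]

end Stmt19Aux4

namespace Stmt19Aux5
open List Stmt19Aux Stmt19Aux2 Stmt19Aux3 Stmt19Aux4

lemma countP_one {α : Type*} (p : α → Bool) (a : α) :
    ∀ (l : List α), l.Nodup → a ∈ l → (∀ b ∈ l, p b = true ↔ b = a) → l.countP p = 1 := by
  intro l
  induction l with
  | nil => intro _ ha _; simp at ha
  | cons x xs ih =>
    intro hl ha hp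
    rw [List.countP_cons]
    rcases List.mem_cons.1 ha with rfl | ha'
    · have hx : p a = true := (hp a (by simp)).2 rfl
      have h0 : xs.countP p = 0 := by
        rw [List.countP_eq_zero]
        intro b hb hpb
        have hba := (hp b (by simp [hb])).1 hpb
        subst hba
        exact (List.nodup_cons.1 hl).1 hb
      simp [hx, h0]
    · have hx : ¬ (p x = true) := by
        intro hpx
        have hxa := (hp x (by simp)).1 hpx
        subst hxa
        exact (List.nodup_cons.1 hl).1 ha'
      have hrec := ih (List.nodup_cons.1 hl).2 ha' (fun b hb => hp b (by simp [hb]))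
      simp [hx, hrec]

lemma pair_cast (t : ℕ) (L : List (ℕ × ℕ)) :
    ((L.map (c2 t)).flatMap fun x => [x.1, x.2])
      = (L.flatMap fun x => [x.1, x.2]).map (Nat.cast : ℕ → ZMod t) := by
  rw [List.flatMap_map, List.map_flatMap]
  apply Stmt19Aux4.flatMap_congr
  intro x _
  simp [c2]

lemma neg_cast {t j : ℕ} (h : j ≤ t) : -(j : ZMod t) = ((t - j : ℕ) : ZMod t) := by
  have key : ((t - j : ℕ) : ZMod t) + (j : ZMod t) = 0 := by
    rw [← Nat.cast_add, Nat.sub_add_cancel h, ZMod.natCast_self]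
  exact neg_eq_of_add_eq_zero_left key

lemma pm_char (t n m lo : ℕ) (ht : t = 2 * n) (hlo : lo = n - m) (hmn : m < n) (d : ZMod t) :
    (d ∈ pmSet t lo (n - 1)) ↔ ∃ r : ℕ, n - m ≤ r ∧ r ≤ n + m ∧ r ≠ n ∧ d = (r : ZMod t) := by
  subst hlo
  unfold pmSet
  simp only [Finset.mem_union, Finset.mem_image, Finset.mem_Icc]
  constructor
  · rintro (⟨j, ⟨hj1, hj2⟩, rfl⟩ | ⟨j, ⟨hj1, hj2⟩, rfl⟩)
    · exact ⟨j, by omega, by omega, by omega, rfl⟩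
    · refine ⟨t - j, by omega, by omega, by omega, ?_⟩
      rw [neg_cast (by omega)]
  · rintro ⟨r, h1, h2, h3, rfl⟩
    rcases Nat.lt_or_ge r n with hlt | hge
    · exact Or.inl ⟨r, ⟨by omega, by omega⟩, rfl⟩
    · refine Or.inr ⟨t - r, ⟨by omega, by omega⟩, ?_⟩
      rw [neg_cast (by omega)]
      have e : t - (t - r) = r := by omega
      rw [e]

theorem key (t n m q z : ℕ) (ht : t = 2 * n) (hz : z ≤ 1) (hmn : m + z < n)
    (hq1 : 1 ≤ q → m + q + 1 + z < n) (hqm : q ≤ m) (S : Finset (ZMod t))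
    (hS : ∀ d : ZMod t, d ∈ S ↔
      ∃ r : ℕ, n - m ≤ r ∧ r ≤ n + m ∧ (r = n → z = 1) ∧ d = (r : ZMod t)) :
    OrthogonalPathsAnd2Cycles t S (2 * q + z) (m - q) := by
  classical
  set E : List (ZMod t × ZMod t) := (En n m q z).map (c2 t) with hE
  set W : List (ZMod t × ZMod t) := (Wn n m q).map (c2 t) with hW
  have hEl : E.length = 2 * q + z := by rw [hE, List.length_map, En_length _ _ _ _ hz]
  have hWl : W.length = m - q := by rw [hW, List.length_map, Wn_length]
  refine ⟨fun i => E.get (Fin.cast hEl.symm i), fun j => W.get (Fin.cast hWl.symm j),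
    ?_, ?_, ?_⟩
  · -- vertices nodup
    rw [ofFn_get_map E (fun x => [x.1, x.2]) hEl, ofFn_get_map W (fun x => [x.1, x.2]) hWl,
      ← List.flatMap_def, ← List.flatMap_def, ← List.flatMap_append, ← List.map_append,
      pair_cast]
    exact nodup_cast_of_lt _ (V_nodup hz hmn hq1 hqm) (V_lt t ht hz hmn hq1 hqm)
  · -- all differences in S
    rw [ofFn_get_map E (fun x => [x]) hEl, ofFn_get_map W (fun x => [x, (x.2, x.1)]) hWl,
      ← List.flatMap_def, ← List.flatMap_def, List.flatMap_singleton']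
    intro x hx
    have hmem : x.2 - x.1 ∈ (E ++ W.flatMap fun y => [y, (y.2, y.1)]).map
        fun y => y.2 - y.1 := List.mem_map_of_mem hx
    rw [hE, hW, arcs_diff t ht hz hmn hq1 hqm] at hmem
    obtain ⟨v, hv, hveq⟩ := List.mem_map.1 hmem
    have hb := Dn_bounds hmn hqm v hv
    exact (hS _).2 ⟨v, hb.1, hb.2.1, hb.2.2, hveq.symm⟩
  · -- each difference exactly once
    intro d hd
    obtain ⟨r, hr1, hr2, hr3, rfl⟩ := (hS d).1 hd
    rw [ofFn_get_map E (fun x => [x]) hEl, ofFn_get_map W (fun x => [x, (x.2, x.1)]) hWl,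
      ← List.flatMap_def, ← List.flatMap_def, List.flatMap_singleton',
      ← List.countP_eq_length_filter]
    have e1 : List.countP (fun x : ZMod t × ZMod t => decide (x.2 - x.1 = (r : ZMod t)))
        (E ++ W.flatMap fun y => [y, (y.2, y.1)])
        = List.countP (fun y : ZMod t => decide (y = (r : ZMod t)))
          ((E ++ W.flatMap fun y => [y, (y.2, y.1)]).map fun x => x.2 - x.1) :=
      (List.countP_map (p := fun y : ZMod t => decide (y = (r : ZMod t)))
        (f := fun x : ZMod t × ZMod t => x.2 - x.1)).symm
    rw [e1, hE, hW, arcs_diff t ht hz hmn hq1 hqm]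
    have hnd : ((Dn n m q z).map (Nat.cast : ℕ → ZMod t)).Nodup := by
      refine nodup_cast_of_lt _ (Dn_nodup hmn hqm) ?_
      intro v hv
      have := Dn_bounds hmn hqm v hv
      omega
    have hmm : ((r : ℕ) : ZMod t) ∈ (Dn n m q z).map (Nat.cast : ℕ → ZMod t) :=
      List.mem_map_of_mem (Dn_cover hmn hqm r hr1 hr2 hr3)
    refine countP_one _ _ _ hnd hmm ?_
    intro b _
    simp
end Stmt19Aux5

/-- Lemma: under the stated conditions on a, s, t (t even), the directed circulant
Circ(t; S), with S = {±(s+1)/2, …, ±(t/2−1)} ∪ {t/2} for odd s and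
S = {±(s/2), …, ±(t/2−1)} for even s, admits an S-orthogonal
(P₁^⟨a⟩, C₂^⟨(t−s−a)/2⟩)-subdigraph. -/
theorem stmt19 (a s t : ℕ) (hte : Even t) (hs : 2 ≤ s) (hst : s < t)
    (ha1 : a ≤ s / 3) (ha2 : a ≤ t - s) (hpar : a % 2 = s % 2)
    (S : Finset (ZMod t))
    (hS : S = if s % 2 = 1 then
        insert ((t / 2 : ℕ) : ZMod t) (pmSet t ((s + 1) / 2) (t / 2 - 1))
      else pmSet t (s / 2) (t / 2 - 1)) :
    OrthogonalPathsAnd2Cycles t S a ((t - s - a) / 2) := by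
  classical
  have ht2 : t % 2 = 0 := Nat.even_iff.1 hte
  by_cases hs2 : s % 2 = 1
  · -- s odd
    set n := t / 2 with hn
    set m := (t - s - 1) / 2 with hm
    set q := (a - 1) / 2 with hq
    have e2 : (t - s - a) / 2 = m - q := by omega
    have e1 : a = 2 * q + 1 := by omega
    rw [hS, if_pos hs2, e2, e1]
    refine Stmt19Aux5.key t n m q 1 (by omega) (by omega) (by omega)
      (fun h => by omega) (by omega) _ ?_
    intro d
    rw [Finset.mem_insert,
      Stmt19Aux5.pm_char t n m ((s + 1) / 2) (by omega) (by omega) (by omega) d]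
    constructor
    · rintro (rfl | ⟨r, h1, h2, h3, rfl⟩)
      · exact ⟨n, by omega, by omega, fun _ => rfl, rfl⟩
      · exact ⟨r, h1, h2, fun _ => rfl, rfl⟩
    · rintro ⟨r, h1, h2, _, rfl⟩
      by_cases hr : r = n
      · subst hr; exact Or.inl rfl
      · exact Or.inr ⟨r, h1, h2, hr, rfl⟩
  · -- s even
    have hs0 : s % 2 = 0 := by omega
    set n := t / 2 with hn
    set m := (t - s) / 2 with hm
    set q := a / 2 with hq
    have e2 : (t - s - a) / 2 = m - q := by omega
    have e1 : a = 2 * q + 0 := by omega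
    rw [hS, if_neg hs2, e2, e1]
    refine Stmt19Aux5.key t n m q 0 (by omega) (by omega) (by omega)
      (fun h => by omega) (by omega) _ ?_
    intro d
    rw [Stmt19Aux5.pm_char t n m (s / 2) (by omega) (by omega) (by omega) d]
    constructor
    · rintro ⟨r, h1, h2, h3, rfl⟩
      exact ⟨r, h1, h2, fun he => absurd he h3, rfl⟩
    · rintro ⟨r, h1, h2, h3, rfl⟩
      exact ⟨r, h1, h2, fun he => absurd (h3 he) (by omega), rfl⟩
end
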